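/- arXiv:1708.06404 — 12 statements merged into one kernel-verified Lean document; each statement's English description precedes it below -/
import Mathlib

section
/- If a topological space Y is sequentially separable and satisfies S_fin(S, Ω_y) at every point y, then Y satisfies S_fin(S, D): for every sequence of countable sequentially dense subsets one can choose finite subsets from each so that their union is dense in Y. -/
open Set Filter Topology

/-- `D` is sequentially dense: every point is a limit of a sequence from `D`. -/
def SeqDense {Y : Type*} [TopologicalSpace Y] (D : Set Y) : Prop :=
  ∀ y : Y, ∃ u : ℕ → Y, (∀ n, u n ∈ D) ∧ Tendsto u atTop (𝓝 y)

/-- If `Y` is sequentially separable and satisfies S_fin(S, Ω_y) at every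
point, then `Y` satisfies S_fin(S, D). -/
theorem stmt7 {Y : Type*} [TopologicalSpace Y]
    (hsep : ∃ D : Set Y, D.Countable ∧ SeqDense D)
    (h : ∀ y : Y, ∀ S : ℕ → Set Y, (∀ n, (S n).Countable ∧ SeqDense (S n)) →
      ∃ B : ℕ → Set Y, (∀ n, (B n).Finite ∧ B n ⊆ S n) ∧ y ∈ closure (⋃ n, B n)) :
    ∀ S : ℕ → Set Y, (∀ n, (S n).Countable ∧ SeqDense (S n)) →
      ∃ B : ℕ → Set Y, (∀ n, (B n).Finite ∧ B n ⊆ S n) ∧ Dense (⋃ n, B n) := by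
  intro S hS
  by_cases hY : IsEmpty Y
  · exact ⟨fun _ => ∅, fun n => ⟨finite_empty, empty_subset _⟩,
      fun y => (hY.false y).elim⟩
  rw [not_isEmpty_iff] at hY
  obtain ⟨D, hDc, hDs⟩ := hsep
  -- D is nonempty
  obtain ⟨u, hu, -⟩ := hDs hY.some
  have hDne : D.Nonempty := ⟨u 0, hu 0⟩
  obtain ⟨d, hd⟩ := hDc.exists_eq_range hDne
  -- for each k, apply h at d k with the column S ∘ (Nat.pair k)
  have key : ∀ k : ℕ, ∃ C : ℕ → Set Y,
      (∀ n, (C n).Finite ∧ C n ⊆ S (Nat.pair k n)) ∧ d k ∈ closure (⋃ n, C n) :=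
    fun k => h (d k) (fun n => S (Nat.pair k n)) (fun n => hS _)
  choose C hC hCd using key
  refine ⟨fun m => C (Nat.unpair m).1 (Nat.unpair m).2, fun m => by
    simpa [Nat.pair_unpair] using hC (Nat.unpair m).1 (Nat.unpair m).2, ?_⟩
  -- each d k is in the closure of the union
  have hsub : ∀ k, (⋃ n, C k n) ⊆ ⋃ m, C (Nat.unpair m).1 (Nat.unpair m).2 := by
    intro k x hx
    obtain ⟨n, hn⟩ := mem_iUnion.1 hx
    exact mem_iUnion.2 ⟨Nat.pair k n, by simpa [Nat.unpair_pair] using hn⟩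
  have hDsub : D ⊆ closure (⋃ m, C (Nat.unpair m).1 (Nat.unpair m).2) := by
    intro x hx
    rw [hd] at hx
    obtain ⟨k, rfl⟩ := hx
    exact closure_mono (hsub k) (hCd k)
  -- every point is a limit of a sequence from D, hence in the closure
  intro y
  obtain ⟨v, hv, hvt⟩ := hDs y
  exact isClosed_closure.mem_of_tendsto hvt
    (Eventually.of_forall fun n => hDsub (hv n))
end

section
/- For a Tychonoff space X: if C_p(X) satisfies S_fin(Ω_f, Γ_f) at every function f (countable selectively sequentially fan tightness for Ω-to-Γ selections choosing finitely many from each), then X satisfies S_fin(Ω, Γ): for every sequence of open ω-covers of X one can choose finite subfamilies whose union is a γ-cover of X. -/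
open Set Filter Topology

/-- The set of continuous real-valued functions on `X`. The ambient space
`X → ℝ` carries the product topology, i.e. the topology of pointwise
convergence, so closures and neighborhoods below are those of `C_p(X)`. -/
def Cp (X : Type*) [TopologicalSpace X] : Set (X → ℝ) := {f | Continuous f}

/-- `A` clusters at `y` but omits `y` (the family Ω_y). -/
def OmegaAt {Y : Type*} [TopologicalSpace Y] (y : Y) (A : Set Y) : Prop :=
  y ∈ closure A ∧ y ∉ A

/-- `A` converges to `y` (the family Γ_y): infinite, omits `y`, and almost
contained in each neighborhood of `y`. -/
def GammaAt {Y : Type*} [TopologicalSpace Y] (y : Y) (A : Set Y) : Prop :=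
  A.Infinite ∧ y ∉ A ∧ ∀ W ∈ 𝓝 y, (A \ W).Finite

/-- An infinite family of sets such that each point lies in all but finitely
many members. -/
def GammaFam {X : Type*} (U : Set (Set X)) : Prop :=
  U.Infinite ∧ ∀ x : X, {u ∈ U | x ∉ u}.Finite

/-- `U` is a γ-cover of `X`. -/
def IsGammaCover {X : Type*} [TopologicalSpace X] (U : Set (Set X)) : Prop :=
  (∀ u ∈ U, IsOpen u) ∧ (univ : Set X) ∉ U ∧ GammaFam U

/-- `U` is an ω-cover of `X`: a nontrivial open cover such that every finite
subset of `X` is contained in some member. -/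
def IsOmegaCover {X : Type*} [TopologicalSpace X] (U : Set (Set X)) : Prop :=
  (∀ u ∈ U, IsOpen u) ∧ (univ : Set X) ∉ U ∧
    ∀ F : Set X, F.Finite → ∃ u ∈ U, F ⊆ u

/-- A zero-set: the preimage of `0` under a continuous real function. -/
def IsZeroSet {X : Type*} [TopologicalSpace X] (Z : Set X) : Prop :=
  ∃ f : X → ℝ, Continuous f ∧ Z = f ⁻¹' {0}

/-- A cozero-set: the complement of a zero-set. -/
def IsCozeroSet {X : Type*} [TopologicalSpace X] (U : Set X) : Prop :=
  ∃ f : X → ℝ, Continuous f ∧ U = {x | f x ≠ 0}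

/-- A γ_F-shrinkable γ-cover: a γ-cover by cozero-sets admitting a zero-set
shrinking which is itself a γ-family. -/
def GammaFShrinkable {X : Type*} [TopologicalSpace X] (U : Set (Set X)) : Prop :=
  IsGammaCover U ∧ (∀ u ∈ U, IsCozeroSet u) ∧
    ∃ F : Set X → Set X, (∀ u ∈ U, IsZeroSet (F u) ∧ F u ⊆ u) ∧ GammaFam (F '' U)

/-- `A` is 1-dense in `C_p(X)`. -/
def OneDense {X : Type*} (A : Set (X → ℝ)) : Prop :=
  ∀ x : X, ∀ W : Set ℝ, IsOpen W → W.Nonempty → ∃ f ∈ A, f x ∈ W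

/-- `A` is 1-dense at the function `f`. -/
def OneDenseAt {X : Type*} (f : X → ℝ) (A : Set (X → ℝ)) : Prop :=
  ∀ x : X, ∀ ε : ℝ, 0 < ε → ∃ h ∈ A, |h x - f x| < ε

/-- `A` is `n`-dense in `C_p(X)`. -/
def NDense {X : Type*} (n : ℕ) (A : Set (X → ℝ)) : Prop :=
  ∀ x : Fin n → X, Function.Injective x → ∀ W : Fin n → Set ℝ,
    (∀ i, IsOpen (W i) ∧ (W i).Nonempty) → ∃ f ∈ A, ∀ i, f (x i) ∈ W i

/-- If `C_p(X)` satisfies S_fin(Ω_f, Γ_f) at every `f`, then `X` satisfies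
S_fin(Ω, Γ). -/
theorem stmt8 {X : Type*} [TopologicalSpace X] [T35Space X]
    (h : ∀ f ∈ Cp X, ∀ A : ℕ → Set (X → ℝ), (∀ n, A n ⊆ Cp X ∧ OmegaAt f (A n)) →
      ∃ F : ℕ → Set (X → ℝ), (∀ n, (F n).Finite ∧ F n ⊆ A n) ∧ GammaAt f (⋃ n, F n)) :
    ∀ U : ℕ → Set (Set X), (∀ n, IsOmegaCover (U n)) →
      ∃ V : ℕ → Set (Set X), (∀ n, (V n).Finite ∧ V n ⊆ U n) ∧
        IsGammaCover (⋃ n, V n) := by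
  classical
  intro U hU
  set A : ℕ → Set (X → ℝ) := fun n =>
    {g | Continuous g ∧ ∃ u ∈ U n, ∀ x ∉ u, g x = 0} with hAdef
  have hone : ∀ n, (1 : X → ℝ) ∉ A n := by
    rintro n ⟨-, u, hu, h0⟩
    have hne : u ≠ univ := by rintro rfl; exact (hU n).2.1 hu
    obtain ⟨x, hx⟩ := (ne_univ_iff_exists_notMem u).1 hne
    simpa using h0 x hx
  have hclos : ∀ n, (1 : X → ℝ) ∈ closure (A n) := by
    intro n
    rw [mem_closure_iff_nhds]
    intro t ht
    rw [nhds_pi, Filter.mem_pi'] at ht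
    obtain ⟨I, t', ht', hsub⟩ := ht
    obtain ⟨u, hu, hIu⟩ := (hU n).2.2 (I : Set X) I.finite_toSet
    have hUry : ∀ x ∈ (I : Set X), ∃ g : X → ℝ,
        Continuous g ∧ g x = 1 ∧ ∀ y ∉ u, g y = 0 := by
      intro x hx
      obtain ⟨f, hfc, hf0, hf1⟩ :=
        CompletelyRegularSpace.completely_regular x uᶜ
          (((hU n).1 u hu).isClosed_compl) (by simpa using hIu hx)
      refine ⟨fun y => 1 - (f y : ℝ),
        continuous_const.sub (continuous_subtype_val.comp hfc), by simp [hf0], ?_⟩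
      intro y hy
      have : f y = 1 := hf1 hy
      simp [this]
    choose! g hgc hg1 hg0 using hUry
    refine ⟨fun y => 1 - ∏ x ∈ I, (1 - g x y), ?_, ?_, u, hu, ?_⟩
    · apply hsub
      intro x hx
      have hx' : x ∈ (I : Set X) := hx
      have hz : (1 : ℝ) - g x x = 0 := by rw [hg1 x hx']; ring
      have hprod : ∏ x' ∈ I, ((1 : ℝ) - g x' x) = 0 :=
        Finset.prod_eq_zero (Finset.mem_coe.1 hx) hz
      simp only [hprod, sub_zero]
      exact mem_of_mem_nhds (ht' x)
    · exact continuous_const.sub (continuous_finset_prod I fun x hx =>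
        continuous_const.sub (hgc x (Finset.mem_coe.2 hx)))
    · intro y hy
      have hprod : ∏ x ∈ I, ((1 : ℝ) - g x y) = 1 := by
        apply Finset.prod_eq_one
        intro x hx
        rw [hg0 x (Finset.mem_coe.2 hx) y hy]; ring
      simp [hprod]
  obtain ⟨F, hF, hΓ⟩ := h 1 continuous_one A
    (fun n => ⟨fun g hg => hg.1, hclos n, hone n⟩)
  -- disjointify
  set G : ℕ → Set (X → ℝ) := fun n => F n \ ⋃ m < n, F m with hGdef
  have hGsub : ∀ n, G n ⊆ F n := fun n => diff_subset
  have hGuniq : ∀ {n m : ℕ} {g}, g ∈ G n → g ∈ G m → n = m := by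
    intro n m g hn hm
    by_contra hne
    rcases lt_or_gt_of_ne hne with hlt | hlt
    · exact hm.2 (mem_biUnion hlt hn.1)
    · exact hn.2 (mem_biUnion hlt hm.1)
  have hGunion : (⋃ n, G n) = ⋃ n, F n := by
    apply Subset.antisymm (iUnion_mono hGsub)
    intro g hg
    have hg' : ∃ n, g ∈ F n := mem_iUnion.1 hg
    refine mem_iUnion.2 ⟨Nat.find hg', Nat.find_spec hg', ?_⟩
    intro hmem
    rw [mem_iUnion₂] at hmem
    obtain ⟨m, hm, hgm⟩ := hmem
    exact Nat.find_min hg' hm hgm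
  -- choose witnesses
  have hwit : ∀ n : ℕ, ∀ g, g ∈ A n → ∃ u, u ∈ U n ∧ ∀ x ∉ u, g x = 0 := by
    rintro n g ⟨-, u, hu, h0⟩; exact ⟨u, hu, h0⟩
  choose! c hcU hc0 using hwit
  have hidx0 : ∀ g : X → ℝ, g ∈ (⋃ n, G n) → ∃ m, g ∈ G m := fun g hg => mem_iUnion.1 hg
  choose! idx hidx using hidx0
  set V : ℕ → Set (Set X) := fun n => c n '' G n with hVdef
  have hFA : ∀ n, F n ⊆ A n := fun n => (hF n).2
  have hGA : ∀ n, G n ⊆ A n := fun n => (hGsub n).trans (hFA n)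
  -- finite sets of "bad" functions at a point
  have hS : ∀ x : X, {g : X → ℝ | g ∈ (⋃ n, F n) ∧ g x = 0}.Finite := by
    intro x
    have hW : {f : X → ℝ | f x ≠ 0} ∈ 𝓝 (1 : X → ℝ) := by
      have ho : IsOpen {f : X → ℝ | f x ≠ 0} :=
        isOpen_compl_singleton.preimage (continuous_apply x)
      exact ho.mem_nhds (by simp)
    exact (hΓ.2.2 _ hW).subset (fun g hg => ⟨hg.1, by simp [hg.2]⟩)
  refine ⟨V, fun n => ⟨((hF n).1.subset (hGsub n)).image _, ?_⟩, ?_, ?_, ?_, ?_⟩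
  · rintro u ⟨g, hg, rfl⟩
    exact hcU n g (hGA n hg)
  · rintro u hu
    obtain ⟨n, g, hg, rfl⟩ := by simpa [hVdef] using hu
    exact (hU n).1 _ (hcU n g (hGA n hg))
  · intro hu
    obtain ⟨n, g, hg, hgu⟩ := by simpa [hVdef] using hu
    exact (hU n).2.1 (hgu ▸ hcU n g (hGA n hg))
  · -- infinite
    intro hfin
    have hfin' : (⋃ n, V n).Finite := hfin
    have hGfin : (⋃ n, G n).Finite := by
      have hsub : (⋃ n, G n) ⊆
          ⋃ u ∈ (⋃ n, V n), {g : X → ℝ | g ∈ (⋃ n, G n) ∧ c (idx g) g = u} := by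
        intro g hg
        have h1 : g ∈ G (idx g) := hidx g hg
        exact mem_biUnion (mem_iUnion.2 ⟨idx g, mem_image_of_mem _ h1⟩) ⟨hg, rfl⟩
      refine Set.Finite.subset (hfin'.biUnion ?_) hsub
      intro u hu
      obtain ⟨n, g₀, hg₀, rfl⟩ := by simpa [hVdef] using hu
      have huU : c n g₀ ∈ U n := hcU n g₀ (hGA n hg₀)
      have hne : c n g₀ ≠ univ := by intro he; exact (hU n).2.1 (he ▸ huU)
      obtain ⟨x, hx⟩ := (ne_univ_iff_exists_notMem _).1 hne
      refine (hS x).subset ?_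
      rintro g ⟨hg, hgu⟩
      have h1 : g ∈ G (idx g) := hidx g hg
      have h2 : g x = 0 := hc0 (idx g) g (hGA _ h1) x (hgu ▸ hx)
      exact ⟨hGunion ▸ hg, h2⟩
    exact hΓ.1 (hGunion ▸ hGfin)
  · -- all but finitely many
    intro x
    refine ((hS x).image (fun g => c (idx g) g)).subset ?_
    rintro u ⟨hu, hxu⟩
    obtain ⟨n, g, hg, rfl⟩ := by simpa [hVdef] using hu
    have hgG : g ∈ (⋃ n, G n) := mem_iUnion.2 ⟨n, hg⟩
    have h1 : g ∈ G (idx g) := hidx g hgG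
    have heq : idx g = n := hGuniq h1 hg
    have h2 : g x = 0 := hc0 n g (hGA n hg) x hxu
    refine ⟨g, ⟨mem_iUnion.2 ⟨n, hGsub n hg⟩, h2⟩, ?_⟩
    show c (idx g) g = c n g
    rw [heq]
end

section
/- For a Tychonoff space X: if X satisfies S_fin(Γ_F, Ω) then C_p(X) satisfies S_fin(Γ_0, Ω_0) at the zero function, i.e., for every sequence (A_n) of sequences of continuous functions converging pointwise to 0, one can choose finite sets F_n ⊆ A_n such that the zero function lies in the closure of ⋃_n F_n in the topology of pointwise convergence. -/
open Set Filter Topology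

/-!
Write `U_{n,f} = {x | |f x| < r n}` with `r n → 0`. If infinitely many `A n` contain a function
uniformly below `r n`, those functions alone converge to `0`. Otherwise, from some index on no
`U_{n,f}` is all of `X`, the families `{U_{n,f} | f ∈ A n}` are `γ_F`-shrinkable (shrink `U_{n,f}`
to `{x | |f x| ≤ r n / 2}`), and `S_fin(Γ_F, Ω)` selects finitely many `U_{n,f}` forming an
ω-cover. Since each finite stage of the selection has finitely many proper members, every finite
`T ⊆ X` lies in some selected `U_{n,f}` with `n` arbitrarily large, so `|f| < r n` on `T`.
-/

def SfinGammaFOmega (X : Type*) [TopologicalSpace X] : Prop :=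
  ∀ U : ℕ → Set (Set X), (∀ n, GammaFShrinkable (U n)) →
    ∃ V : ℕ → Set (Set X), (∀ n, (V n).Finite ∧ V n ⊆ U n) ∧ IsOmegaCover (⋃ n, V n)

/-- The instance of `S_fin(Γ_0, Ω_0)` at `0` for the single sequence `A`. -/
def HasFinSelectionAtZero {X : Type*} (A : ℕ → Set (X → ℝ)) : Prop :=
  ∃ F : ℕ → Set (X → ℝ), (∀ n, (F n).Finite ∧ F n ⊆ A n) ∧ (0 : X → ℝ) ∈ closure (⋃ n, F n)

section ZeroSets

variable {X : Type*} [TopologicalSpace X]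

lemma IsCozeroSet.isOpen {U : Set X} (hU : IsCozeroSet U) : IsOpen U := by
  obtain ⟨f, hf, rfl⟩ := hU
  exact isOpen_ne_fun hf continuous_const

lemma isCozeroSet_setOf_lt {g : X → ℝ} (hg : Continuous g) (r : ℝ) :
    IsCozeroSet {x | g x < r} :=
  ⟨fun x => max (r - g x) 0, by fun_prop, by ext x; simp⟩

lemma isZeroSet_setOf_le {g : X → ℝ} (hg : Continuous g) (r : ℝ) :
    IsZeroSet {x | g x ≤ r} :=
  ⟨fun x => max (g x - r) 0, by fun_prop, by ext x; simp⟩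

end ZeroSets

lemma gammaFam_image {α X : Type*} {s : Set α} {φ : α → Set X} (hs : s.Infinite)
    (hne : ∀ a ∈ s, φ a ≠ univ) (hpt : ∀ x, {a ∈ s | x ∉ φ a}.Finite) :
    GammaFam (φ '' s) := by
  refine ⟨fun hfin => hs ?_, fun x => ((hpt x).image φ).subset ?_⟩
  · -- all `a` in the fibre over `u` miss a common point outside `u`, so the fibre is finite
    refine (hfin.biUnion (t := fun u => {a ∈ s | φ a = u}) fun u hu => ?_).subset
      fun a ha => mem_biUnion (mem_image_of_mem φ ha) ⟨ha, rfl⟩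
    obtain ⟨b, hb, rfl⟩ := hu
    obtain ⟨x, hx⟩ := (ne_univ_iff_exists_notMem _).1 (hne b hb)
    exact (hpt x).subset fun a ⟨ha, hab⟩ => ⟨ha, hab ▸ hx⟩
  · rintro _ ⟨⟨a, ha, rfl⟩, hx⟩
    exact ⟨a, ⟨ha, hx⟩, rfl⟩

lemma gammaFShrinkable_image {α X : Type*} [TopologicalSpace X] {s : Set α} {φ ψ : α → Set X}
    (hs : s.Infinite) (hφ : ∀ a ∈ s, IsCozeroSet (φ a)) (hψ : ∀ a ∈ s, IsZeroSet (ψ a))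
    (hψφ : ∀ a ∈ s, ψ a ⊆ φ a) (hne : ∀ a ∈ s, φ a ≠ univ)
    (hpt : ∀ x, {a ∈ s | x ∉ ψ a}.Finite) :
    GammaFShrinkable (φ '' s) := by
  have hγ : GammaFam (φ '' s) := gammaFam_image hs hne fun x =>
    (hpt x).subset fun a ⟨ha, hx⟩ => ⟨ha, fun hψx => hx (hψφ a ha hψx)⟩
  have : Nonempty α := hs.nonempty.to_type
  choose! g hgs hφg using fun u (hu : u ∈ φ '' s) => hu
  have hgs' : g '' (φ '' s) ⊆ s := image_subset_iff.2 hgs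
  refine ⟨⟨?_, ?_, hγ⟩, forall_mem_image.2 hφ, ψ ∘ g, fun u hu => ⟨hψ _ (hgs u hu), ?_⟩, ?_⟩
  · exact forall_mem_image.2 fun a ha => (hφ a ha).isOpen
  · rintro ⟨a, ha, hau⟩
    exact hne a ha hau
  · exact (hψφ _ (hgs u hu)).trans (hφg u hu).subset
  · rw [image_comp]
    refine gammaFam_image (hγ.1.image (LeftInvOn.injOn hφg)) (fun a ha hψa => ?_)
      fun x => (hpt x).subset fun a ha => ⟨hgs' ha.1, ha.2⟩
    exact hne a (hgs' ha) (eq_univ_of_univ_subset (hψa ▸ hψφ a (hgs' ha)))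

lemma GammaAt.finite_setOf_le_abs {X : Type*} {A : Set (X → ℝ)} (hA : GammaAt 0 A) (x : X)
    {ε : ℝ} (hε : 0 < ε) : {f ∈ A | ε ≤ |f x|}.Finite := by
  have hW : {g : X → ℝ | |g x| < ε} ∈ 𝓝 0 :=
    (isOpen_lt (continuous_apply x).abs continuous_const).mem_nhds (by simpa using hε)
  exact (hA.2.2 _ hW).subset fun f ⟨hf, hx⟩ => ⟨hf, hx.not_gt⟩

lemma gammaFShrinkable_image_setOf_abs_lt {X : Type*} [TopologicalSpace X] {A : Set (X → ℝ)}
    (hAc : A ⊆ Cp X) (hA : GammaAt 0 A) {ε : ℝ} (hε : 0 < ε)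
    (hlarge : ∀ f ∈ A, ∃ x, ε ≤ |f x|) :
    GammaFShrinkable ((fun f : X → ℝ => {x | |f x| < ε}) '' A) := by
  refine gammaFShrinkable_image (ψ := fun f => {x | |f x| ≤ ε / 2}) hA.1
    (fun f hf => isCozeroSet_setOf_lt (hAc hf).abs ε)
    (fun f hf => isZeroSet_setOf_le (hAc hf).abs (ε / 2))
    (fun f _ x hx => lt_of_le_of_lt hx (half_lt_self hε)) (fun f hf huniv => ?_)
    fun x => (hA.finite_setOf_le_abs x (half_pos hε)).subset fun f ⟨hf, hx⟩ =>
      ⟨hf, (not_le.1 hx).le⟩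
  obtain ⟨x, hx⟩ := hlarge f hf
  exact (huniv.symm ▸ mem_univ x : x ∈ {x | |f x| < ε}).not_ge hx

lemma IsOmegaCover.frequently_exists_subset {X : Type*} [TopologicalSpace X]
    {V : ℕ → Set (Set X)} (hω : IsOmegaCover (⋃ n, V n)) (hV : ∀ n, (V n).Finite)
    {T : Set X} (hT : T.Finite) : ∃ᶠ n in atTop, ∃ u ∈ V n, T ⊆ u := by
  refine frequently_atTop.2 fun j => ?_
  set W := ⋃ i < j, V i
  have hW : Finite W := ((finite_Iio j).biUnion fun i _ => hV i).to_subtype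
  choose p hp using fun w : W => (ne_univ_iff_exists_notMem w.1).1 fun hwu =>
    hω.2.1 (hwu ▸ mem_iUnion.2 (by obtain ⟨i, -, hi⟩ := mem_iUnion₂.1 w.2; exact ⟨i, hi⟩))
  obtain ⟨u, hu, hTu⟩ := hω.2.2 (T ∪ range p) (hT.union (finite_range p))
  obtain ⟨m, hm⟩ := mem_iUnion.1 hu
  refine ⟨m, not_lt.1 fun hmj => ?_, u, hm, subset_union_left.trans hTu⟩
  have huW : u ∈ W := mem_iUnion₂.2 ⟨m, hmj, hm⟩
  exact hp ⟨u, huW⟩ (hTu (Or.inr (mem_range_self _)))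

section Selection

variable {X : Type*}

lemma zero_mem_closure_iUnion_of_frequently {F : ℕ → Set (X → ℝ)} {r : ℕ → ℝ}
    (hr : Tendsto r atTop (𝓝 0))
    (h : ∀ T : Set X, T.Finite → ∃ᶠ n in atTop, ∃ f ∈ F n, ∀ x ∈ T, |f x| < r n) :
    (0 : X → ℝ) ∈ closure (⋃ n, F n) := by
  have hbasis : (𝓝 (0 : X → ℝ)).HasBasis
      (fun p : Set X × (X → ℝ) => p.1.Finite ∧ ∀ x ∈ p.1, 0 < p.2 x)
      fun p => p.1.pi fun x => Metric.ball 0 (p.2 x) := by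
    rw [nhds_pi]
    exact hasBasis_pi fun _ => Metric.nhds_basis_ball
  rw [mem_closure_iff_nhds_basis hbasis]
  rintro ⟨T, ε⟩ ⟨hT, hε⟩
  have hsmall : ∀ᶠ n in atTop, ∀ x ∈ T, r n < ε x :=
    (eventually_all_finite hT).2 fun x hx => hr.eventually (gt_mem_nhds (hε x hx))
  obtain ⟨n, ⟨f, hf, hfT⟩, hn⟩ := ((h T hT).and_eventually hsmall).exists
  refine ⟨f, mem_iUnion_of_mem n hf, fun x hx => ?_⟩
  simpa [Real.dist_eq] using (hfT x hx).trans (hn x hx)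

lemma hasFinSelectionAtZero_of_frequently {A : ℕ → Set (X → ℝ)} {r : ℕ → ℝ}
    (hr : Tendsto r atTop (𝓝 0)) (hA : ∃ᶠ n in atTop, ∃ f ∈ A n, ∀ x, |f x| < r n) :
    HasFinSelectionAtZero A := by
  set P : ℕ → Prop := fun n => ∃ f ∈ A n, ∀ x, |f x| < r n
  choose! g hgA hg using fun n (hn : P n) => hn
  refine ⟨fun n => {f | P n ∧ f = g n}, fun n => ⟨?_, ?_⟩, ?_⟩
  · exact (finite_singleton (g n)).subset fun f hf => hf.2
  · rintro f ⟨hn, rfl⟩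
    exact hgA n hn
  · exact zero_mem_closure_iUnion_of_frequently hr fun T _ =>
      hA.mono fun n hn => ⟨g n, ⟨hn, rfl⟩, fun x _ => hg n hn x⟩

lemma HasFinSelectionAtZero.of_add {A : ℕ → Set (X → ℝ)} (N : ℕ)
    (h : HasFinSelectionAtZero fun n => A (n + N)) : HasFinSelectionAtZero A := by
  classical
  obtain ⟨F, hF, h0⟩ := h
  refine ⟨fun n => if N ≤ n then F (n - N) else ∅, fun n => ?_, closure_mono ?_ h0⟩
  · dsimp only
    split_ifs with hn
    · simpa [Nat.sub_add_cancel hn] using hF (n - N)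
    · simp
  · exact iUnion_subset fun k => subset_iUnion_of_subset (k + N) (by simp)

lemma SfinGammaFOmega.hasFinSelectionAtZero [TopologicalSpace X] (hX : SfinGammaFOmega X)
    {A : ℕ → Set (X → ℝ)} (hA : ∀ n, A n ⊆ Cp X ∧ GammaAt 0 (A n)) {r : ℕ → ℝ}
    (hr0 : ∀ n, 0 < r n) (hr : Tendsto r atTop (𝓝 0))
    (hlarge : ∀ n, ∀ f ∈ A n, ∃ x, r n ≤ |f x|) : HasFinSelectionAtZero A := by
  set U : ℕ → Set (Set X) := fun n => (fun f : X → ℝ => {x | |f x| < r n}) '' A n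
  obtain ⟨V, hV, hω⟩ := hX U fun n =>
    gammaFShrinkable_image_setOf_abs_lt (hA n).1 (hA n).2 (hr0 n) (hlarge n)
  choose! g hgA hgu using fun n u (hu : u ∈ U n) => hu
  refine ⟨fun n => g n '' V n, fun n => ⟨(hV n).1.image _, ?_⟩, ?_⟩
  · exact image_subset_iff.2 fun u hu => hgA n u ((hV n).2 hu)
  refine zero_mem_closure_iUnion_of_frequently hr fun T hT =>
    (hω.frequently_exists_subset (fun n => (hV n).1) hT).mono fun n ⟨u, hu, hTu⟩ =>
      ⟨g n u, mem_image_of_mem _ hu, fun x hx => ?_⟩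
  have hxu : x ∈ u := hTu hx
  rwa [← hgu n u ((hV n).2 hu)] at hxu

end Selection

theorem stmt9_general {X : Type*} [TopologicalSpace X]
    (h : ∀ U : ℕ → Set (Set X), (∀ n, GammaFShrinkable (U n)) →
      ∃ V : ℕ → Set (Set X), (∀ n, (V n).Finite ∧ V n ⊆ U n) ∧
        IsOmegaCover (⋃ n, V n)) :
    ∀ A : ℕ → Set (X → ℝ), (∀ n, A n ⊆ Cp X ∧ GammaAt (0 : X → ℝ) (A n)) →
      ∃ F : ℕ → Set (X → ℝ), (∀ n, (F n).Finite ∧ F n ⊆ A n) ∧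
        (0 : X → ℝ) ∈ closure (⋃ n, F n) := by
  intro A hA
  have hr : Tendsto (fun n : ℕ => (1 / 2 : ℝ) ^ n) atTop (𝓝 0) :=
    tendsto_pow_atTop_nhds_zero_of_lt_one (by norm_num) (by norm_num)
  by_cases hsmall : ∃ᶠ n in atTop, ∃ f ∈ A n, ∀ x, |f x| < (1 / 2 : ℝ) ^ n
  · exact hasFinSelectionAtZero_of_frequently hr hsmall
  obtain ⟨N, hN⟩ := eventually_atTop.1 (not_frequently.1 hsmall)
  push Not at hN
  have hX : SfinGammaFOmega X := h
  exact HasFinSelectionAtZero.of_add N <|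
    hX.hasFinSelectionAtZero (fun n => hA (n + N)) (fun n => pow_pos (by norm_num) _)
      (hr.comp (tendsto_add_atTop_nat N)) fun n => hN (n + N) (Nat.le_add_left N n)

/-- If `X` satisfies S_fin(Γ_F, Ω), then `C_p(X)` satisfies S_fin(Γ_0, Ω_0)
at the zero function. -/
theorem stmt9 {X : Type*} [TopologicalSpace X] [T35Space X]
    (h : ∀ U : ℕ → Set (Set X), (∀ n, GammaFShrinkable (U n)) →
      ∃ V : ℕ → Set (Set X), (∀ n, (V n).Finite ∧ V n ⊆ U n) ∧
        IsOmegaCover (⋃ n, V n)) :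
    ∀ A : ℕ → Set (X → ℝ), (∀ n, A n ⊆ Cp X ∧ GammaAt (0 : X → ℝ) (A n)) →
      ∃ F : ℕ → Set (X → ℝ), (∀ n, (F n).Finite ∧ F n ⊆ A n) ∧
        (0 : X → ℝ) ∈ closure (⋃ n, F n) :=
  stmt9_general h
end

section
/- For a Tychonoff space X: if C_p(X) satisfies S_1(Γ_0, Ω_0) at the zero function (for every sequence of pointwise-convergent-to-0 sequences one can select one function from each so that 0 is in the pointwise closure of the selection), then X satisfies S_1(Γ_F, Ω): for each sequence of γ_F-shrinkable γ-covers one can select one member from each so that the chosen sets form an ω-cover. -/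
open Set Filter Topology

lemma exists_phi {X : Type*} [TopologicalSpace X] {u Z : Set X}
    (hu : IsCozeroSet u) (hZ : IsZeroSet Z) (hZu : Z ⊆ u) :
    ∃ f : X → ℝ, Continuous f ∧ (∀ x, 0 ≤ f x ∧ f x ≤ 1) ∧
      (∀ x ∈ Z, f x = 0) ∧ (∀ x, f x = 1 ↔ x ∉ u) := by
  obtain ⟨g, hgc, hgu⟩ := hu
  obtain ⟨z, hzc, hzZ⟩ := hZ
  have hden : ∀ x, 0 < z x ^ 2 + g x ^ 2 := by
    intro x
    rcases (add_nonneg (sq_nonneg (z x)) (sq_nonneg (g x))).eq_or_lt with hx | hx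
    · exfalso
      have hz0 : z x = 0 := by nlinarith [sq_nonneg (z x), sq_nonneg (g x)]
      have hg0 : g x = 0 := by nlinarith [sq_nonneg (z x), sq_nonneg (g x)]
      have hxZ : x ∈ Z := by rw [hzZ]; simp [hz0]
      have := hZu hxZ
      rw [hgu] at this
      exact this hg0
    · exact hx
  refine ⟨fun x => z x ^ 2 / (z x ^ 2 + g x ^ 2), ?_, ?_, ?_, ?_⟩
  · exact Continuous.div (by fun_prop) (by fun_prop) (fun x => (hden x).ne')
  · intro x
    constructor
    · exact div_nonneg (sq_nonneg _) (hden x).le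
    · rw [div_le_one (hden x)]; nlinarith [sq_nonneg (g x)]
  · intro x hx
    have hz0 : z x = 0 := by
      rw [hzZ] at hx; simpa using hx
    simp [hz0]
  · intro x
    rw [div_eq_one_iff_eq (hden x).ne']
    constructor
    · intro hx
      have hg0 : g x = 0 := by nlinarith [sq_nonneg (g x)]
      rw [hgu]; simp [hg0]
    · intro hx
      have hg0 : g x = 0 := by
        rw [hgu] at hx; simpa using hx
      rw [hg0]; ring

/-- If `C_p(X)` satisfies S_1(Γ_0, Ω_0) at the zero function, then `X`
satisfies S_1(Γ_F, Ω). -/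
theorem stmt10 {X : Type*} [TopologicalSpace X] [T35Space X]
    (h : ∀ A : ℕ → Set (X → ℝ), (∀ n, A n ⊆ Cp X ∧ GammaAt (0 : X → ℝ) (A n)) →
      ∃ f : ℕ → X → ℝ, (∀ n, f n ∈ A n) ∧ (0 : X → ℝ) ∈ closure (range f)) :
    ∀ U : ℕ → Set (Set X), (∀ n, GammaFShrinkable (U n)) →
      ∃ u : ℕ → Set X, (∀ n, u n ∈ U n) ∧ IsOmegaCover (range u) := by
  intro U hU
  have hnuniv : ∀ n, (univ : Set X) ∉ U n := fun n => (hU n).1.2.1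
  have hcoz : ∀ n, ∀ u ∈ U n, IsCozeroSet u := fun n => (hU n).2.1
  choose F hF hFgam using fun n => (hU n).2.2
  -- the Urysohn-type functions
  have hphi : ∀ (n : ℕ) (u : Set X), ∃ f : X → ℝ, u ∈ U n →
      Continuous f ∧ (∀ x, 0 ≤ f x ∧ f x ≤ 1) ∧
        (∀ x ∈ F n u, f x = 0) ∧ (∀ x, f x = 1 ↔ x ∉ u) := by
    intro n u
    by_cases hu : u ∈ U n
    · obtain ⟨f, hf⟩ := exists_phi (hcoz n u hu) (hF n u hu).1 (hF n u hu).2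
      exact ⟨f, fun _ => hf⟩
    · exact ⟨0, fun hc => absurd hc hu⟩
  choose Φ hΦ using hphi
  -- a section of F on its image
  have hsec : ∀ (n : ℕ) (v : Set X), ∃ w : Set X, v ∈ F n '' U n →
      w ∈ U n ∧ F n w = v := by
    intro n v
    by_cases hv : v ∈ F n '' U n
    · obtain ⟨w, hw, hFw⟩ := hv
      exact ⟨w, fun _ => ⟨hw, hFw⟩⟩
    · exact ⟨∅, fun hc => absurd hc hv⟩
  choose s hs using hsec
  set U' : ℕ → Set (Set X) := fun n => s n '' (F n '' U n) with hU'def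
  have hU'sub : ∀ n, U' n ⊆ U n := by
    rintro n _ ⟨v, hv, rfl⟩
    exact (hs n v hv).1
  have hU'fix : ∀ n, ∀ u ∈ U' n, s n (F n u) = u := by
    rintro n _ ⟨v, hv, rfl⟩
    rw [(hs n v hv).2]
  have hFinj : ∀ n, Set.InjOn (F n) (U' n) := by
    intro n u hu u' hu' he
    rw [← hU'fix n u hu, ← hU'fix n u' hu', he]
  have hΦinj : ∀ n, Set.InjOn (Φ n) (U n) := by
    intro n u hu u' hu' he
    have h1 := fun x => (hΦ n u hu).2.2.2 x
    have h2 := fun x => (hΦ n u' hu').2.2.2 x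
    ext x
    have : (x ∉ u) ↔ (x ∉ u') := by
      rw [← h1 x, he, h2 x]
    exact not_iff_not.mp this
  have hU'inf : ∀ n, (U' n).Infinite := by
    intro n
    have hinj : Set.InjOn (s n) (F n '' U n) := by
      intro v hv v' hv' he
      rw [← (hs n v hv).2, ← (hs n v' hv').2, he]
    exact (hFgam n).1.image hinj
  set A : ℕ → Set (X → ℝ) := fun n => Φ n '' U' n with hAdef
  have hA : ∀ n, A n ⊆ Cp X ∧ GammaAt (0 : X → ℝ) (A n) := by
    intro n
    constructor
    · rintro _ ⟨u, hu, rfl⟩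
      exact (hΦ n u (hU'sub n hu)).1
    refine ⟨?_, ?_, ?_⟩
    · exact (hU'inf n).image ((hΦinj n).mono (hU'sub n))
    · rintro ⟨u, hu, hzero⟩
      have huU := hU'sub n hu
      have hne : u ≠ univ := fun hc => hnuniv n (hc ▸ huU)
      obtain ⟨x, hx⟩ : ∃ x, x ∉ u := by
        by_contra hc
        push_neg at hc
        exact hne (eq_univ_of_forall hc)
      have := ((hΦ n u huU).2.2.2 x).mpr hx
      rw [hzero] at this
      norm_num at this
    · intro W hW
      rw [nhds_pi, Filter.mem_pi] at hW
      obtain ⟨I, hIfin, t, ht, hsub⟩ := hW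
      have hBfin : (⋃ i ∈ I, {u ∈ U' n | i ∉ F n u}).Finite := by
        refine hIfin.biUnion (fun i _ => ?_)
        refine Set.Finite.of_finite_image ?_ ((hFinj n).mono (sep_subset _ _))
        refine (((hFgam n).2 i).subset ?_)
        rintro _ ⟨u, ⟨hu, hiu⟩, rfl⟩
        exact ⟨mem_image_of_mem _ (hU'sub n hu), hiu⟩
      refine (hBfin.image (Φ n)).subset ?_
      rintro _ ⟨⟨u, hu, rfl⟩, hgW⟩
      have huU := hU'sub n hu
      have : ∃ i ∈ I, Φ n u i ∉ t i := by
        by_contra hc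
        push_neg at hc
        exact hgW (hsub fun i hi => hc i hi)
      obtain ⟨i, hiI, hit⟩ := this
      have hiF : i ∉ F n u := by
        intro hiF
        have h0 : Φ n u i = 0 := (hΦ n u huU).2.2.1 i hiF
        have : (0 : ℝ) ∈ t i := mem_of_mem_nhds (ht i)
        rw [h0] at hit
        exact hit this
      exact ⟨u, mem_biUnion hiI ⟨hu, hiF⟩, rfl⟩
  obtain ⟨f, hf, hcl⟩ := h A hA
  have hsel : ∀ n, ∃ u, u ∈ U' n ∧ Φ n u = f n := by
    intro n
    obtain ⟨u, hu, he⟩ := hf n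
    exact ⟨u, hu, he⟩
  choose u hu hΦu using hsel
  refine ⟨u, fun n => hU'sub n (hu n), ?_, ?_, ?_⟩
  · rintro _ ⟨n, rfl⟩
    obtain ⟨g, hgc, hgu⟩ := hcoz n (u n) (hU'sub n (hu n))
    rw [hgu]
    exact (isOpen_compl_singleton.preimage hgc)
  · rintro ⟨n, hn⟩
    exact hnuniv n (hn ▸ hU'sub n (hu n))
  · intro G hGfin
    set W : Set (X → ℝ) := Set.pi G (fun _ => Metric.ball (0 : ℝ) 1) with hWdef
    have hW : W ∈ 𝓝 (0 : X → ℝ) := by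
      rw [nhds_pi]
      exact Filter.mem_pi.mpr ⟨G, hGfin, fun _ => Metric.ball (0 : ℝ) 1,
        fun i => Metric.ball_mem_nhds _ one_pos, subset_rfl⟩
    obtain ⟨g, hgW, n, rfl⟩ := mem_closure_iff_nhds.mp hcl W hW
    refine ⟨u n, mem_range_self n, fun x hx => ?_⟩
    have hball := hgW x hx
    rw [Metric.mem_ball, Real.dist_eq, sub_zero] at hball
    by_contra hxu
    have := ((hΦ n (u n) (hU'sub n (hu n))).2.2.2 x).mpr hxu
    rw [hΦu n] at this
    rw [this] at hball
    norm_num at hball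
end

section
/- For a Tychonoff space X: if X satisfies S_1(Γ_F, Γ) then C_p(X) satisfies S_1(Γ_0, Γ_0) at the zero function: for every sequence (A_i) of sets of continuous functions converging pointwise to 0, one can select f_i ∈ A_i such that {f_i} ∈ Γ_0, i.e. the sequence (f_i) converges pointwise to 0. -/
open Set Filter Topology

/-! ### Auxiliary lemmas -/

section AuxBasic

variable {X : Type*}

lemma ball_mem_nhds_zero (x : X) {ε : ℝ} (hε : 0 < ε) :
    {g : X → ℝ | |g x| < ε} ∈ 𝓝 (0 : X → ℝ) := by
  have hopen : IsOpen {g : X → ℝ | |g x| < ε} := by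
    have : {g : X → ℝ | |g x| < ε} = (fun g : X → ℝ => |g x|) ⁻¹' Set.Iio ε := rfl
    rw [this]
    exact isOpen_Iio.preimage ((continuous_apply x).abs)
  exact hopen.mem_nhds (by simp [hε])

lemma exists_basic_nhd {W : Set (X → ℝ)} (hW : W ∈ 𝓝 (0 : X → ℝ)) :
    ∃ (s : Set X) (ε : ℝ), s.Finite ∧ 0 < ε ∧
      ∀ g : X → ℝ, (∀ x ∈ s, |g x| < ε) → g ∈ W := by
  rw [nhds_pi, Filter.mem_pi] at hW
  obtain ⟨I, hIfin, V, hV, hsub⟩ := hW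
  have hrad : ∀ x : X, ∃ r : ℝ, 0 < r ∧ ∀ y : ℝ, |y| < r → y ∈ V x := by
    intro x
    obtain ⟨r, hr, hball⟩ := Metric.mem_nhds_iff.mp (hV x)
    exact ⟨r, hr, fun y hy => hball (by simpa [Real.dist_eq] using hy)⟩
  choose r hr₁ hr₂ using hrad
  classical
  by_cases hI : (hIfin.toFinset).Nonempty
  · refine ⟨I, (hIfin.toFinset).inf' hI r, hIfin, ?_, ?_⟩
    · rw [Finset.lt_inf'_iff]
      intro b _; exact hr₁ b
    · intro g hg
      apply hsub
      intro x hx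
      refine hr₂ x (g x) (lt_of_lt_of_le (hg x hx) ?_)
      exact Finset.inf'_le r (by simpa using hx)
  · refine ⟨I, 1, hIfin, one_pos, ?_⟩
    intro g _
    apply hsub
    intro x hx
    exact absurd (hIfin.mem_toFinset.mpr hx)
      (by simp [Finset.not_nonempty_iff_eq_empty.mp hI])

lemma finite_large_at {A : Set (X → ℝ)} (hg : GammaAt (0 : X → ℝ) A)
    (x : X) {η : ℝ} (hη : 0 < η) : {f ∈ A | η ≤ |f x|}.Finite := by
  refine (hg.2.2 _ (ball_mem_nhds_zero x hη)).subset ?_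
  rintro f ⟨hfA, hf⟩
  exact ⟨hfA, fun hW => absurd hW (not_lt.mpr hf)⟩

lemma exists_infinite_fiber {α β : Type*} {s : Set α} (hs : s.Infinite) (g : α → β)
    (h : (g '' s).Finite) : ∃ b, {a ∈ s | g a = b}.Infinite := by
  by_contra hcon
  push_neg at hcon
  have hsub : s ⊆ ⋃ b ∈ g '' s, {a ∈ s | g a = b} := by
    intro a ha; exact Set.mem_biUnion (Set.mem_image_of_mem g ha) ⟨ha, rfl⟩
  exact hs ((h.biUnion (fun b _ => hcon b)).subset hsub)

lemma finite_nat_inv {ε : ℝ} (hε : 0 < ε) : {n : ℕ | ε ≤ 1 / ((n : ℝ) + 1)}.Finite := by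
  refine (Set.finite_Iio (⌈1/ε⌉₊ + 1)).subset ?_
  intro n hn
  simp only [Set.mem_setOf_eq] at hn
  have hn1 : (0:ℝ) < (n : ℝ) + 1 := by positivity
  have h1 : (n : ℝ) + 1 ≤ 1 / ε := by
    rw [le_div_iff₀ hε]
    calc ((n:ℝ)+1) * ε ≤ ((n:ℝ)+1) * (1/((n:ℝ)+1)) :=
          mul_le_mul_of_nonneg_left hn (le_of_lt hn1)
      _ = 1 := by field_simp
  have h2 : (n : ℝ) ≤ 1/ε := by linarith
  have h3 : (n : ℕ) ≤ ⌈1/ε⌉₊ := by exact_mod_cast h2.trans (Nat.le_ceil _)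
  simpa [Set.mem_Iio, Nat.lt_succ_iff] using h3

lemma gammaAt_range_of {f : ℕ → X → ℝ} (h0 : ∀ n, f n ≠ 0)
    (hfin : ∀ s : Set X, s.Finite → ∀ ε : ℝ, 0 < ε → {n : ℕ | ∃ x ∈ s, ε ≤ |f n x|}.Finite) :
    GammaAt (0 : X → ℝ) (Set.range f) := by
  have hW : ∀ W ∈ 𝓝 (0 : X → ℝ), {n : ℕ | f n ∉ W}.Finite := by
    intro W hWn
    obtain ⟨s, ε, hs, hε, hsub⟩ := exists_basic_nhd hWn
    refine (hfin s hs ε hε).subset ?_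
    intro n hn
    simp only [Set.mem_setOf_eq] at hn ⊢
    by_contra hcon
    push_neg at hcon
    exact hn (hsub _ hcon)
  refine ⟨?_, ?_, ?_⟩
  · by_contra hfin'
    rw [Set.not_infinite] at hfin'
    obtain ⟨g, hgfib⟩ := exists_infinite_fiber (Set.infinite_univ (α := ℕ)) f
      (by simpa [Set.image_univ] using hfin')
    have hg0 : g ≠ 0 := by
      obtain ⟨n, -, hn⟩ := hgfib.nonempty
      exact hn ▸ h0 n
    obtain ⟨x, hx⟩ := Function.ne_iff.mp hg0
    have hxx : (0 : ℝ) < |g x| := abs_pos.mpr hx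
    refine hgfib ((hW _ (ball_mem_nhds_zero x hxx)).subset ?_)
    rintro n ⟨-, hn⟩
    simp only [Set.mem_setOf_eq, hn]
    exact fun hlt => lt_irrefl _ hlt
  · rintro ⟨n, hn⟩
    exact h0 n hn
  · intro W hWn
    refine ((hW W hWn).image f).subset ?_
    rintro g ⟨⟨n, rfl⟩, hgW⟩
    exact ⟨n, hgW, rfl⟩

end AuxBasic

/-! ### Sublevel covers are γ_F-shrinkable -/

section ShrinkSec

variable {X : Type*} [TopologicalSpace X]

omit [TopologicalSpace X] in
lemma sublevel_image_infinite {A : Set (X → ℝ)} {δ : ℝ}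
    (hg : GammaAt (0 : X → ℝ) A) (hδ : 0 < δ)
    (hnu : ∀ f ∈ A, ∃ x, δ ≤ |f x|) :
    ((fun f : X → ℝ => {x | |f x| < δ}) '' A).Infinite := by
  by_contra hfin
  rw [Set.not_infinite] at hfin
  obtain ⟨v, hv⟩ := exists_infinite_fiber hg.1 _ hfin
  obtain ⟨f₀, hf₀A, hf₀⟩ := hv.nonempty
  obtain ⟨x₀, hx₀⟩ := hnu f₀ hf₀A
  have hx₀v : x₀ ∉ v := by
    rw [← hf₀]
    simp only [Set.mem_setOf_eq, not_lt]
    exact hx₀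
  have hsub : {a ∈ A | (fun f : X → ℝ => {x | |f x| < δ}) a = v} ⊆ {f ∈ A | δ ≤ |f x₀|} := by
    rintro f ⟨hfA, hfv⟩
    refine ⟨hfA, ?_⟩
    by_contra hlt
    push_neg at hlt
    exact hx₀v (hfv ▸ (hlt : x₀ ∈ {x | |f x| < δ}))
  exact hv ((finite_large_at hg x₀ hδ).subset hsub)

lemma shrinkable_of_sub {A : Set (X → ℝ)} {δ : ℝ}
    (hcp : A ⊆ Cp X) (hg : GammaAt (0 : X → ℝ) A) (hδ : 0 < δ)
    (hnu : ∀ f ∈ A, ∃ x, δ ≤ |f x|)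
    {V : Set (Set X)} (hVsub : V ⊆ (fun f : X → ℝ => {x | |f x| < δ}) '' A)
    (hVinf : V.Infinite) :
    GammaFShrinkable V := by
  have hδ2 : 0 < δ / 2 := by linarith
  have hwit0 : ∀ u : Set X, ∃ f : X → ℝ, u ∈ V → f ∈ A ∧ ∀ x, (|f x| < δ ↔ x ∈ u) := by
    intro u
    by_cases hu : u ∈ V
    · obtain ⟨f, hf, hfu⟩ := hVsub hu
      exact ⟨f, fun _ => ⟨hf, fun x => by rw [← hfu]; rfl⟩⟩
    · exact ⟨0, fun h => absurd h hu⟩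
  choose w hw using hwit0
  have hwA : ∀ u ∈ V, w u ∈ A := fun u hu => (hw u hu).1
  have hwS : ∀ u ∈ V, ∀ x, |w u x| < δ ↔ x ∈ u := fun u hu => (hw u hu).2
  have huniv : ∀ u ∈ V, u ≠ Set.univ := by
    intro u hu hequ
    obtain ⟨x, hx⟩ := hnu _ (hwA u hu)
    exact absurd ((hwS u hu x).mpr (hequ ▸ Set.mem_univ x)) (not_lt.mpr hx)
  have hopen : ∀ u ∈ V, IsOpen u := by
    intro u hu
    obtain ⟨f, hf, hfu⟩ := hVsub hu
    have : u = (fun x => |f x|) ⁻¹' Set.Iio δ := by rw [← hfu]; rfl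
    rw [this]
    exact isOpen_Iio.preimage ((hcp hf).abs)
  have hxcond : ∀ x : X, {u ∈ V | x ∉ u}.Finite := by
    intro x
    refine ((finite_large_at hg x hδ).image (fun f : X → ℝ => {y | |f y| < δ})).subset ?_
    rintro u ⟨hu, hxu⟩
    refine ⟨w u, ⟨hwA u hu, not_lt.mp (fun hlt => hxu ((hwS u hu x).mp hlt))⟩, ?_⟩
    ext y
    exact hwS u hu y
  set F : Set X → Set X := fun u => {x | |w u x| ≤ δ / 2} with hF
  have hFz : ∀ u, ∀ x, x ∈ F u ↔ |w u x| ≤ δ / 2 := fun u x => Iff.rfl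
  refine ⟨⟨hopen, fun hV => huniv _ hV rfl, hVinf, hxcond⟩, ?_, F, ?_, ?_, ?_⟩
  · intro u hu
    refine ⟨fun x => max (δ - |w u x|) 0, ?_, ?_⟩
    · exact (continuous_const.sub (hcp (hwA u hu)).abs).max continuous_const
    · ext x
      simp only [Set.mem_setOf_eq, ne_eq]
      rw [← hwS u hu x, max_eq_right_iff]
      constructor
      · intro hlt hle; linarith
      · intro hne; by_contra hle; push_neg at hle; exact hne (by linarith)
  · intro u hu
    constructor
    · refine ⟨fun x => max (|w u x| - δ / 2) 0, ?_, ?_⟩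
      · exact ((hcp (hwA u hu)).abs.sub continuous_const).max continuous_const
      · ext x
        simp only [hF, Set.mem_setOf_eq, Set.mem_preimage, Set.mem_singleton_iff]
        rw [max_eq_right_iff]
        constructor <;> intro h <;> linarith
    · intro x hx
      rw [hF] at hx
      simp only [Set.mem_setOf_eq] at hx
      exact (hwS u hu x).mp (by linarith)
  · by_contra hfin
    rw [Set.not_infinite] at hfin
    obtain ⟨z, hz⟩ := exists_infinite_fiber hVinf F hfin
    obtain ⟨u₀, hu₀V, hu₀z⟩ := hz.nonempty
    have hzuniv : z ≠ Set.univ := by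
      intro hequ
      apply huniv u₀ hu₀V
      apply Set.eq_univ_of_forall
      intro x
      have hx : x ∈ F u₀ := by rw [hu₀z, hequ]; exact Set.mem_univ x
      rw [hFz u₀ x] at hx
      exact (hwS u₀ hu₀V x).mp (by linarith)
    obtain ⟨x, hx⟩ := (Set.ne_univ_iff_exists_notMem z).mp hzuniv
    have hinj : Set.InjOn w {u ∈ V | F u = z} := by
      rintro u ⟨huV, _⟩ u' ⟨hu'V, _⟩ heq
      ext y
      rw [← hwS u huV y, ← hwS u' hu'V y, heq]
    have himg : w '' {u ∈ V | F u = z} ⊆ {f ∈ A | δ/2 ≤ |f x|} := by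
      rintro f ⟨u, ⟨huV, huz⟩, rfl⟩
      refine ⟨hwA u huV, ?_⟩
      have hxz : x ∉ F u := huz ▸ hx
      rw [hFz u x] at hxz
      linarith [not_le.mp hxz]
    exact (hz.image hinj) ((finite_large_at hg x hδ2).subset himg)
  · intro x
    refine ((finite_large_at hg x hδ2).image (fun f : X → ℝ => {y | |f y| ≤ δ/2})).subset ?_
    rintro z ⟨⟨u, huV, rfl⟩, hxz⟩
    refine ⟨w u, ⟨hwA u huV, ?_⟩, rfl⟩
    rw [hF] at hxz
    simp only [Set.mem_setOf_eq, not_le] at hxz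
    linarith

end ShrinkSec

/-! ### Disjoint refinement of countably many infinite families -/

noncomputable section DR

variable {β : Type*} (S : ℕ → Set β) (hS : ∀ k, (S k).Infinite)

noncomputable def drList : ℕ → List β
  | 0 => []
  | (t + 1) =>
    drList t ++ [((hS (Nat.unpair t).1).diff (drList t).finite_toSet).nonempty.some]

noncomputable def drc (t : ℕ) : β :=
  ((hS (Nat.unpair t).1).diff (drList S hS t).finite_toSet).nonempty.some

lemma drList_succ (t : ℕ) : drList S hS (t + 1) = drList S hS t ++ [drc S hS t] := rfl

lemma drc_mem (t : ℕ) : drc S hS t ∈ S (Nat.unpair t).1 :=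
  (((hS (Nat.unpair t).1).diff (drList S hS t).finite_toSet).nonempty.some_mem).1

lemma drc_notMem_list (t : ℕ) : drc S hS t ∉ drList S hS t :=
  (((hS (Nat.unpair t).1).diff (drList S hS t).finite_toSet).nonempty.some_mem).2

lemma drc_mem_list {s t : ℕ} (h : s < t) : drc S hS s ∈ drList S hS t := by
  induction t with
  | zero => omega
  | succ t ih =>
    rw [drList_succ]
    rcases Nat.lt_succ_iff_lt_or_eq.mp h with h' | h'
    · exact List.mem_append_left _ (ih h')
    · subst h'; exact List.mem_append_right _ (List.mem_singleton_self _)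

lemma drc_injective : Function.Injective (drc S hS) := by
  have key : ∀ s t : ℕ, s < t → drc S hS s ≠ drc S hS t := by
    intro s t h heq
    exact drc_notMem_list S hS t (heq ▸ drc_mem_list S hS h)
  intro s t h
  rcases Nat.lt_trichotomy s t with h' | h' | h'
  · exact absurd h (key s t h')
  · exact h'
  · exact absurd h.symm (key t s h')

include hS in
lemma exists_disjoint_refinement :
    ∃ V : ℕ → Set β, (∀ k, V k ⊆ S k) ∧ (∀ k, (V k).Infinite) ∧
      (∀ k l : ℕ, k ≠ l → ∀ v, v ∈ V k → v ∉ V l) := by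
  refine ⟨fun k => drc S hS '' {t | (Nat.unpair t).1 = k}, ?_, ?_, ?_⟩
  · rintro k v ⟨t, ht, rfl⟩
    rw [← ht]
    exact drc_mem S hS t
  · intro k
    refine Set.infinite_of_injective_forall_mem
      (f := fun m : ℕ => drc S hS (Nat.pair k m)) ?_ ?_
    · intro m m' hmm
      have h1 := drc_injective S hS hmm
      have h2 := congrArg (fun t => (Nat.unpair t).2) h1
      simpa [Nat.unpair_pair] using h2
    · intro m
      exact ⟨Nat.pair k m, by simp [Nat.unpair_pair], rfl⟩
  · rintro k l hkl v ⟨t, ht, rfl⟩ ⟨t', ht', hteq⟩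
    have h1 := drc_injective S hS hteq.symm
    subst h1
    exact hkl (ht ▸ ht')

end DR

/-! ### The main theorem -/

/-- If `X` satisfies S_1(Γ_F, Γ), then `C_p(X)` satisfies S_1(Γ_0, Γ_0) at
the zero function. -/
theorem stmt11 {X : Type*} [TopologicalSpace X] [T35Space X]
    (h : ∀ U : ℕ → Set (Set X), (∀ n, GammaFShrinkable (U n)) →
      ∃ u : ℕ → Set X, (∀ n, u n ∈ U n) ∧ IsGammaCover (range u)) :
    ∀ A : ℕ → Set (X → ℝ), (∀ n, A n ⊆ Cp X ∧ GammaAt (0 : X → ℝ) (A n)) →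
      ∃ f : ℕ → X → ℝ, (∀ n, f n ∈ A n) ∧ GammaAt (0 : X → ℝ) (range f) := by
  intro A hA
  classical
  have hAcp : ∀ n, A n ⊆ Cp X := fun n => (hA n).1
  have hAg : ∀ n, GammaAt (0 : X → ℝ) (A n) := fun n => (hA n).2
  have h0A : ∀ n, (0 : X → ℝ) ∉ A n := fun n => (hAg n).2.1
  set P : ℕ → Prop := fun n => ∀ ε : ℝ, 0 < ε → ∃ f ∈ A n, ∀ x, |f x| < ε with hP
  have hpos : ∀ n : ℕ, (0:ℝ) < 1 / ((n:ℝ) + 1) := fun n => by positivity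
  have hUchoice : ∀ n : ℕ, ∃ f : X → ℝ,
      P n → (f ∈ A n ∧ ∀ x, |f x| < 1/((n:ℝ)+1)) := by
    intro n
    by_cases hn : P n
    · obtain ⟨f, hf1, hf2⟩ := hn _ (hpos n)
      exact ⟨f, fun _ => ⟨hf1, hf2⟩⟩
    · exact ⟨0, fun hc => absurd hc hn⟩
  choose fu hfu using hUchoice
  have hNUchoice : ∀ n : ℕ, ∃ δ : ℝ,
      ¬ P n → (0 < δ ∧ δ ≤ 1/((n:ℝ)+1) ∧ ∀ f ∈ A n, ∃ x, δ ≤ |f x|) := by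
    intro n
    by_cases hn : P n
    · exact ⟨1, fun hc => absurd hn hc⟩
    · have hn' := hn
      simp only [hP] at hn'
      push_neg at hn'
      obtain ⟨ε, hε, hεf⟩ := hn'
      refine ⟨min ε (1/((n:ℝ)+1)), fun _ =>
        ⟨lt_min hε (hpos n), min_le_right _ _, ?_⟩⟩
      intro f hf
      obtain ⟨x, hx⟩ := hεf f hf
      exact ⟨x, le_trans (min_le_left _ _) hx⟩
  choose δ hδ using hNUchoice
  have main : ∃ f : ℕ → X → ℝ, (∀ n, f n ∈ A n) ∧
      ∀ s : Set X, s.Finite → ∀ ε : ℝ, 0 < ε → {n : ℕ | ∃ x ∈ s, ε ≤ |f n x|}.Finite := by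
    by_cases hNU : {n : ℕ | ¬ P n}.Infinite
    · -- infinitely many non-uniform indices: use the selection principle
      have hq : (setOf fun n => ¬ P n).Infinite := hNU
      set nth : ℕ → ℕ := Nat.nth (fun n => ¬ P n) with hnthdef
      have hnthmem : ∀ k, ¬ P (nth k) := fun k => Nat.nth_mem_of_infinite hq k
      set U : ℕ → Set (Set X) :=
        fun k => (fun f : X → ℝ => {x | |f x| < δ (nth k)}) '' A (nth k) with hU
      have hUinf : ∀ k, (U k).Infinite := fun k =>
        sublevel_image_infinite (hAg _) (hδ _ (hnthmem k)).1 (hδ _ (hnthmem k)).2.2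
      obtain ⟨V, hVsub, hVinf, hVdisj⟩ := exists_disjoint_refinement U hUinf
      have hVshrink : ∀ k, GammaFShrinkable (V k) := fun k =>
        shrinkable_of_sub (hAcp _) (hAg _) (hδ _ (hnthmem k)).1
          (hδ _ (hnthmem k)).2.2 (hVsub k) (hVinf k)
      obtain ⟨u, hu, hucov⟩ := h V hVshrink
      have huinj : Function.Injective u := by
        intro k l hkl
        by_contra hne
        exact hVdisj k l hne (u k) (hu k) (hkl ▸ hu l)
      have hxfin : ∀ x : X, {k : ℕ | x ∉ u k}.Finite := by
        intro x
        have hfin := hucov.2.2.2 x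
        have heq : {k : ℕ | x ∉ u k} = u ⁻¹' {v ∈ Set.range u | x ∉ v} := by
          ext k
          simp only [Set.mem_setOf_eq, Set.mem_preimage]
          exact ⟨fun hk => ⟨⟨k, rfl⟩, hk⟩, fun hk => hk.2⟩
        rw [heq]
        exact Set.Finite.preimage (huinj.injOn) hfin
      have hinv : ∀ n : ℕ, ∃ k : ℕ, ¬ P n → nth k = n := by
        intro n
        by_cases hn : P n
        · exact ⟨0, fun hc => absurd hn hc⟩
        · have hmem : n ∈ Set.range nth := by
            rw [hnthdef, Nat.range_nth_of_infinite hq]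
            exact hn
          obtain ⟨k, hk⟩ := hmem
          exact ⟨k, fun _ => hk⟩
      choose invk hinvk using hinv
      have hwitex : ∀ n : ℕ, ∃ g : X → ℝ,
          ¬ P n → (g ∈ A n ∧ {x | |g x| < δ n} = u (invk n)) := by
        intro n
        by_cases hn : P n
        · exact ⟨0, fun hc => absurd hn hc⟩
        · have h1 : u (invk n) ∈ U (invk n) := hVsub _ (hu (invk n))
          rw [hU] at h1
          simp only at h1
          rw [hinvk n hn] at h1
          obtain ⟨g, hg1, hg2⟩ := h1
          exact ⟨g, fun _ => ⟨hg1, hg2⟩⟩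
      choose gw hgw using hwitex
      refine ⟨fun n => if hn : P n then fu n else gw n, ?_, ?_⟩
      · intro n
        by_cases hn : P n
        · simp only [dif_pos hn]; exact (hfu n hn).1
        · simp only [dif_neg hn]; exact (hgw n hn).1
      · intro s hs ε hε
        have hK : {k : ℕ | ∃ x ∈ s, x ∉ u k}.Finite := by
          refine ((hs.biUnion (fun x _ => hxfin x)).subset ?_)
          rintro k ⟨x, hx, hxk⟩
          exact Set.mem_biUnion hx hxk
        have hNfin : {n : ℕ | ε ≤ 1/((n:ℝ)+1)}.Finite := finite_nat_inv hε
        have hbad2 : {n : ℕ | ¬ P n ∧ invk n ∈ {k : ℕ | ∃ x ∈ s, x ∉ u k}}.Finite := by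
          refine Set.Finite.of_finite_image (f := invk) ?_ ?_
          · refine hK.subset ?_
            rintro k ⟨n, ⟨_, hn2⟩, rfl⟩
            exact hn2
          · rintro n ⟨hn1, -⟩ n' ⟨hn'1, -⟩ heq
            rw [← hinvk n hn1, ← hinvk n' hn'1, heq]
        refine ((hNfin.union hbad2).subset ?_)
        intro n hn
        simp only [Set.mem_setOf_eq] at hn
        obtain ⟨x, hxs, hxn⟩ := hn
        by_cases hle : ε ≤ 1/((n:ℝ)+1)
        · exact Or.inl hle
        push_neg at hle
        right
        by_cases hPn : P n
        · exfalso
          rw [dif_pos hPn] at hxn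
          exact absurd hxn (not_le.mpr (lt_trans ((hfu n hPn).2 x) hle))
        · rw [dif_neg hPn] at hxn
          refine ⟨hPn, x, hxs, ?_⟩
          rw [← (hgw n hPn).2]
          simp only [Set.mem_setOf_eq, not_lt]
          have hδn : δ n ≤ 1/((n:ℝ)+1) := (hδ n hPn).2.1
          linarith
    · -- only finitely many non-uniform indices
      rw [Set.not_infinite] at hNU
      have hnonempty : ∀ n, ∃ g, g ∈ A n := fun n => (hAg n).1.nonempty
      choose g0 hg0 using hnonempty
      refine ⟨fun n => if hn : P n then fu n else g0 n, ?_, ?_⟩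
      · intro n
        by_cases hn : P n
        · simp only [dif_pos hn]; exact (hfu n hn).1
        · simp only [dif_neg hn]; exact hg0 n
      · intro s hs ε hε
        refine ((finite_nat_inv hε).union hNU).subset ?_
        intro n hn
        simp only [Set.mem_setOf_eq] at hn
        obtain ⟨x, hxs, hxn⟩ := hn
        by_cases hle : ε ≤ 1/((n:ℝ)+1)
        · exact Or.inl hle
        push_neg at hle
        right
        by_cases hPn : P n
        · exfalso
          rw [dif_pos hPn] at hxn
          exact absurd hxn (not_le.mpr (lt_trans ((hfu n hPn).2 x) hle))
        · exact hPn
  obtain ⟨f, hfmem, hffin⟩ := main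
  refine ⟨f, hfmem, ?_⟩
  exact gammaAt_range_of (fun n hn => h0A n (hn ▸ hfmem n)) hffin
end

section
/- For a Tychonoff space X: C_p(X) satisfies S_1(A, A) for the family A of 1-dense subsets if and only if X has the Rothberger property S_1(O, O). -/
open Set Filter Topology

/-- `C_p(X)` satisfies S_1(A, A) for the family of 1-dense subsets iff `X`
has the Rothberger property S_1(O, O). -/
theorem stmt12 {X : Type*} [TopologicalSpace X] [T35Space X] :
    (∀ A : ℕ → Set (X → ℝ), (∀ n, A n ⊆ Cp X ∧ OneDense (A n)) →
      ∃ f : ℕ → X → ℝ, (∀ n, f n ∈ A n) ∧ OneDense (range f)) ↔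
    (∀ U : ℕ → Set (Set X), (∀ n, (∀ u ∈ U n, IsOpen u) ∧ ⋃₀ U n = univ) →
      ∃ u : ℕ → Set X, (∀ n, u n ∈ U n) ∧ (⋃ n, u n) = univ) := by
  constructor
  · -- S₁(A,A) → Rothberger
    intro h U hU
    set A : ℕ → Set (X → ℝ) := fun n =>
      {f | Continuous f ∧ ∃ u ∈ U n, ∀ x ∉ u, f x = 1} with hAdef
    have hA1 : ∀ n, A n ⊆ Cp X ∧ OneDense (A n) := by
      intro n
      refine ⟨fun f hf => hf.1, ?_⟩
      intro x W hW hWne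
      obtain ⟨r, hr⟩ := hWne
      have hx : x ∈ ⋃₀ U n := (hU n).2.symm ▸ mem_univ x
      obtain ⟨u, hu, hxu⟩ := hx
      obtain ⟨g, cg, hg0, hg1⟩ :=
        CompletelyRegularSpace.completely_regular x uᶜ
          (((hU n).1 u hu).isClosed_compl) (by simpa using hxu)
      refine ⟨fun y => r + (1 - r) * (g y : ℝ), ⟨?_, u, hu, ?_⟩, ?_⟩
      · exact continuous_const.add (continuous_const.mul (continuous_subtype_val.comp cg))
      · intro y hy
        have h1 : g y = 1 := hg1 hy
        show r + (1 - r) * (g y : ℝ) = 1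
        rw [h1]
        simp
      · have h0 : (g x : ℝ) = 0 := by rw [hg0]; rfl
        show r + (1 - r) * (g x : ℝ) ∈ W
        simpa [h0] using hr
    obtain ⟨f, hf, hfd⟩ := h A hA1
    choose u hu h1 using fun n => (hf n).2
    refine ⟨u, hu, eq_univ_of_forall fun x => ?_⟩
    obtain ⟨g, hg, hgx⟩ := hfd x (Iio 1) isOpen_Iio ⟨0, by norm_num⟩
    obtain ⟨n, rfl⟩ := hg
    refine mem_iUnion.mpr ⟨n, ?_⟩
    by_contra hx
    have := h1 n x hx
    rw [this] at hgx
    exact lt_irrefl (1 : ℝ) hgx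
  · -- Rothberger → S₁(A,A)
    intro h A hA
    rcases isEmpty_or_nonempty X with hX | hX
    · exfalso
      obtain ⟨u, hu, _⟩ := h (fun _ => ∅)
        (fun n => ⟨fun u hu => hu.elim, by
          rw [sUnion_empty]; exact (Set.univ_eq_empty_iff.mpr hX).symm⟩)
      exact Set.notMem_empty _ (hu 0)
    · set E : ℕ ≃ (ℚ × ℚ) × ℕ := (Denumerable.eqv ((ℚ × ℚ) × ℕ)).symm with hE
      have key : ∀ r : ℚ × ℚ, ∃ g : ℕ → X → ℝ,
          (∀ k, g k ∈ A (E.symm (r, k))) ∧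
          ((r.1 : ℝ) < (r.2 : ℝ) → ∀ x : X, ∃ k, g k x ∈ Ioo (r.1 : ℝ) (r.2 : ℝ)) := by
        intro r
        by_cases hr : (r.1 : ℝ) < (r.2 : ℝ)
        · obtain ⟨u, hu, hcov⟩ := h
            (fun k => (fun f : X → ℝ => f ⁻¹' Ioo (r.1 : ℝ) (r.2 : ℝ)) '' A (E.symm (r, k)))
            (by
              intro k
              constructor
              · rintro v ⟨f, hf, rfl⟩
                exact IsOpen.preimage ((hA _).1 hf) isOpen_Ioo
              · apply eq_univ_of_forall
                intro x
                obtain ⟨f, hf, hfx⟩ := (hA (E.symm (r, k))).2 x (Ioo (r.1 : ℝ) (r.2 : ℝ))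
                  isOpen_Ioo (nonempty_Ioo.mpr hr)
                exact ⟨f ⁻¹' Ioo (r.1 : ℝ) (r.2 : ℝ), ⟨f, hf, rfl⟩, hfx⟩)
          have hch : ∀ k, ∃ g, g ∈ A (E.symm (r, k)) ∧
              g ⁻¹' Ioo (r.1 : ℝ) (r.2 : ℝ) = u k := by
            intro k
            obtain ⟨g, hg, hgu⟩ := hu k
            exact ⟨g, hg, hgu⟩
          choose g hg hgu using hch
          refine ⟨g, hg, fun _ x => ?_⟩
          have hx : x ∈ ⋃ k, u k := hcov ▸ mem_univ x
          obtain ⟨k, hk⟩ := mem_iUnion.mp hx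
          refine ⟨k, ?_⟩
          rw [← hgu k] at hk
          exact hk
        · have hch : ∀ k, ∃ g, g ∈ A (E.symm (r, k)) := by
            intro k
            obtain ⟨f, hf, _⟩ := (hA (E.symm (r, k))).2 hX.some univ isOpen_univ univ_nonempty
            exact ⟨f, hf⟩
          choose g hg using hch
          exact ⟨g, hg, fun h' => absurd h' hr⟩
      choose G hG1 hG2 using key
      refine ⟨fun n => G (E n).1 (E n).2, fun n => ?_, ?_⟩
      · have := hG1 (E n).1 (E n).2
        rwa [Prod.mk.eta, Equiv.symm_apply_apply] at this
      · intro x W hW hWne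
        obtain ⟨w, hw⟩ := hWne
        obtain ⟨δ, hδ, hball⟩ := Metric.isOpen_iff.mp hW w hw
        obtain ⟨p, hp1, hp2⟩ := exists_rat_btwn (show w - δ < w by linarith)
        obtain ⟨q, hq1, hq2⟩ := exists_rat_btwn (show w < w + δ by linarith)
        have hpq : ((p : ℝ)) < (q : ℝ) := lt_trans hp2 hq1
        obtain ⟨k, hk⟩ := hG2 (p, q) hpq x
        refine ⟨G (E (E.symm ((p, q), k))).1 (E (E.symm ((p, q), k))).2,
          ⟨E.symm ((p, q), k), rfl⟩, ?_⟩
        rw [Equiv.apply_symm_apply]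
        apply hball
        rw [Real.ball_eq_Ioo]
        exact ⟨by linarith [hk.1], by linarith [hk.2]⟩
end

section
/- For a Tychonoff space X: if X has the Rothberger property S_1(O,O), then C_p(X) satisfies S_1(B_f, B_f) at each f ∈ C_p(X), where B_f is the family of subsets of C(X) that are 1-dense at f. -/
open Set Filter Topology

/-- If `X` has the Rothberger property, then `C_p(X)` satisfies
S_1(B_f, B_f) at each continuous `f`. -/
theorem stmt13 {X : Type*} [TopologicalSpace X] [T35Space X]
    (hR : ∀ U : ℕ → Set (Set X), (∀ n, (∀ u ∈ U n, IsOpen u) ∧ ⋃₀ U n = univ) →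
      ∃ u : ℕ → Set X, (∀ n, u n ∈ U n) ∧ (⋃ n, u n) = univ) :
    ∀ f ∈ Cp X, ∀ B : ℕ → Set (X → ℝ), (∀ n, B n ⊆ Cp X ∧ OneDenseAt f (B n)) →
      ∃ g : ℕ → X → ℝ, (∀ n, g n ∈ B n) ∧ OneDenseAt f (range g) := by
  intro f hf B hB
  have key : ∀ i : ℕ, ∃ u : ℕ → Set X,
      (∀ j, ∃ h, h ∈ B (Nat.pair i j) ∧ u j = {y | |h y - f y| < 1 / (i + 1)}) ∧
      (⋃ j, u j) = univ := by
    intro i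
    have := hR (fun j => {S | ∃ h, h ∈ B (Nat.pair i j) ∧ S = {y | |h y - f y| < 1 / (i + 1)}})
      (by
        intro j
        constructor
        · rintro S ⟨h, hhB, rfl⟩
          exact isOpen_lt (((hB (Nat.pair i j)).1 hhB).sub hf).abs continuous_const
        · ext x
          simp only [mem_sUnion, mem_univ, iff_true, Set.mem_setOf_eq]
          obtain ⟨h, hhB, hx⟩ := (hB (Nat.pair i j)).2 x (1 / (i + 1)) (by positivity)
          exact ⟨_, ⟨h, hhB, rfl⟩, hx⟩)
    obtain ⟨u, hu1, hu2⟩ := this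
    exact ⟨u, hu1, hu2⟩
  choose u hu1 hu2 using key
  choose h hhB heq using hu1
  refine ⟨fun n => h n.unpair.1 n.unpair.2, ?_, ?_⟩
  · intro n
    have := hhB n.unpair.1 n.unpair.2
    rwa [Nat.pair_unpair] at this
  · intro x ε hε
    obtain ⟨i, hi⟩ := exists_nat_one_div_lt hε
    have hx : x ∈ ⋃ j, u i j := by rw [hu2]; trivial
    obtain ⟨j, hj⟩ := mem_iUnion.1 hx
    rw [heq i j] at hj
    refine ⟨h i j, ⟨Nat.pair i j, by simp [Nat.unpair_pair]⟩, lt_trans hj hi⟩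
end

section
/- For a space X: if C_p(X) satisfies S_1(A, B_f) for every f (from sequences of 1-dense sets one can select singletons forming a set 1-dense at f), then C_p(X) satisfies S_1(A, A): from every sequence of 1-dense subsets one can select one function from each so that the selection is 1-dense. -/
open Set Filter Topology

/-!
The rationals are dense in `ℝ`, so a set that is 1-dense at every rational constant function is
1-dense. Split the given sequence into countably many subsequences via a pairing of `ℕ × ℕ` with
`ℕ`, and use the hypothesis at the `i`-th rational constant on the `i`-th subsequence.
-/

theorem OneDenseAt.mono {X : Type*} {f : X → ℝ} {S T : Set (X → ℝ)} (hST : S ⊆ T)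
    (hS : OneDenseAt f S) : OneDenseAt f T := fun x ε hε => by
  obtain ⟨h, hh, hx⟩ := hS x ε hε
  exact ⟨h, hST hh, hx⟩

theorem oneDense_of_forall_oneDenseAt_const {X : Type*} {S : Set (X → ℝ)} {c : ℕ → ℝ}
    (hc : DenseRange c) (hS : ∀ i, OneDenseAt (fun _ => c i) S) : OneDense S := by
  intro x W hW hWne
  obtain ⟨w, hw⟩ := hWne
  obtain ⟨ε, hε, hball⟩ := Metric.isOpen_iff.mp hW w hw
  obtain ⟨i, hi⟩ := hc.exists_dist_lt w (half_pos hε)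
  obtain ⟨h, hhS, hhx⟩ := hS i x (ε / 2) (half_pos hε)
  refine ⟨h, hhS, hball ?_⟩
  calc dist (h x) w ≤ dist (h x) (c i) + dist (c i) w := dist_triangle _ _ _
    _ < ε / 2 + ε / 2 := add_lt_add hhx (by rwa [dist_comm])
    _ = ε := add_halves ε

theorem exists_selection_forall_of_exists_selection_pair {α : Type*} (P : ℕ → Set α → Prop)
    (hP : ∀ i ⦃S T : Set α⦄, S ⊆ T → P i S → P i T) (A : ℕ → Set α)
    (hsel : ∀ i, ∃ g : ℕ → α, (∀ j, g j ∈ A (Nat.pair i j)) ∧ P i (range g)) :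
    ∃ g : ℕ → α, (∀ n, g n ∈ A n) ∧ ∀ i, P i (range g) := by
  choose G hGA hGP using hsel
  refine ⟨fun n => G n.unpair.1 n.unpair.2, fun n => ?_, fun i => hP i ?_ (hGP i)⟩
  · simpa only [Nat.pair_unpair] using hGA n.unpair.1 n.unpair.2
  · rintro _ ⟨j, rfl⟩
    exact ⟨Nat.pair i j, by simp only [Nat.unpair_pair]⟩

/-- If `C_p(X)` satisfies S_1(A, B_f) for every `f`, then `C_p(X)` satisfies
S_1(A, A). -/
theorem stmt14 {X : Type*} [TopologicalSpace X]
    (h : ∀ f ∈ Cp X, ∀ A : ℕ → Set (X → ℝ), (∀ n, A n ⊆ Cp X ∧ OneDense (A n)) →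
      ∃ g : ℕ → X → ℝ, (∀ n, g n ∈ A n) ∧ OneDenseAt f (range g)) :
    ∀ A : ℕ → Set (X → ℝ), (∀ n, A n ⊆ Cp X ∧ OneDense (A n)) →
      ∃ g : ℕ → X → ℝ, (∀ n, g n ∈ A n) ∧ OneDense (range g) := by
  intro A hA
  let c : ℕ → ℝ := fun i => (Denumerable.ofNat ℚ i : ℝ)
  have hc : DenseRange c :=
    Rat.denseRange_cast.comp (Denumerable.eqv ℚ).symm.surjective.denseRange
      Rat.continuous_coe_real
  obtain ⟨g, hgA, hg⟩ := exists_selection_forall_of_exists_selection_pair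
    (fun i S => OneDenseAt (fun _ => c i) S) (fun _ _ _ hST hS => hS.mono hST) A
    (fun i => h _ continuous_const (fun j => A (Nat.pair i j)) (fun j => hA _))
  exact ⟨g, hgA, oneDense_of_forall_oneDenseAt_const hc hg⟩
end

section
/- For a Tychonoff space X: if C_p(X) satisfies S_1({A_n}_{n}, B_0), i.e., for every sequence where the n-th term is an n-dense subset one can select one function from each term so that the selected set is 1-dense at 0, then X satisfies S_1(O, O) (Rothberger property). -/
open Set Filter Topology

/-- Bump function from complete regularity: 1 at `x`, 0 outside the open set `V`. -/
lemma bump_aux {X : Type*} [TopologicalSpace X] [T35Space X] (V : Set X) (hV : IsOpen V)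
    (x : X) (hx : x ∈ V) :
    ∃ g : X → ℝ, Continuous g ∧ g x = 1 ∧ ∀ y ∉ V, g y = 0 := by
  obtain ⟨f, cf, hfx, hfK⟩ := CompletelyRegularSpace.completely_regular x Vᶜ
    hV.isClosed_compl (by simpa using hx)
  refine ⟨fun y => 1 - (f y : ℝ), by fun_prop, by simp [hfx], ?_⟩
  intro y hy
  have : f y = 1 := hfK hy
  simp [this]

/-- An explicit bijection `ℕ ≃ Σ n, Fin (n+1)`. -/
noncomputable def natSigmaEquiv : ℕ ≃ Σ n : ℕ, Fin (n + 1) := by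
  have : Infinite (Σ n : ℕ, Fin (n + 1)) :=
    Infinite.of_injective (fun n => ⟨n, 0⟩) (fun a b hab => (Sigma.mk.inj_iff.1 hab).1)
  haveI := Denumerable.ofEncodableOfInfinite (Σ n : ℕ, Fin (n + 1))
  exact (Denumerable.eqv _).symm

/-- If `C_p(X)` satisfies S_1({A_n}_n, B_0), i.e. from every sequence whose
`n`-th term is `n`-dense (1-based) one can select singletons 1-dense at `0`,
then `X` has the Rothberger property. -/
theorem stmt15 {X : Type*} [TopologicalSpace X] [T35Space X]
    (h : ∀ A : ℕ → Set (X → ℝ), (∀ n, A n ⊆ Cp X ∧ NDense (n + 1) (A n)) →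
      ∃ f : ℕ → X → ℝ, (∀ n, f n ∈ A n) ∧ OneDenseAt (0 : X → ℝ) (range f)) :
    ∀ U : ℕ → Set (Set X), (∀ n, (∀ u ∈ U n, IsOpen u) ∧ ⋃₀ U n = univ) →
      ∃ u : ℕ → Set X, (∀ n, u n ∈ U n) ∧ (⋃ n, u n) = univ := by
  classical
  intro U hU
  set e : (Σ n : ℕ, Fin (n + 1)) → ℕ := fun p => natSigmaEquiv.symm p with he
  set A : ℕ → Set (X → ℝ) := fun n =>
    {f | Continuous f ∧ ∃ s : Fin (n + 1) → Set X,
      (∀ i, s i ∈ U (e ⟨n, i⟩)) ∧ ∀ x, x ∉ (⋃ i, s i) → f x = 1} with hAdef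
  have hA : ∀ n, A n ⊆ Cp X ∧ NDense (n + 1) (A n) := by
    intro n
    refine ⟨fun f hf => hf.1, ?_⟩
    intro x hxinj W hW
    choose w hw using fun i => (hW i).2
    have cover : ∀ i : Fin (n + 1), ∃ v, v ∈ U (e ⟨n, i⟩) ∧ x i ∈ v := by
      intro i
      have h2 := (hU (e ⟨n, i⟩)).2
      have : x i ∈ ⋃₀ U (e ⟨n, i⟩) := h2 ▸ mem_univ _
      obtain ⟨v, hv, hxv⟩ := this
      exact ⟨v, hv, hxv⟩
    choose v hv hxv using cover
    set V : Fin (n + 1) → Set X := fun i => v i \ (x '' {j | j ≠ i}) with hV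
    have hVopen : ∀ i, IsOpen (V i) := by
      intro i
      exact ((hU _).1 (v i) (hv i)).sdiff (((Set.toFinite _).image x).isClosed)
    have hxV : ∀ i, x i ∈ V i := by
      intro i
      refine ⟨hxv i, ?_⟩
      rintro ⟨j, hj, hji⟩
      exact hj (hxinj hji)
    choose g hgc hg1 hg0 using fun i => bump_aux (V i) (hVopen i) (x i) (hxV i)
    refine ⟨fun y => 1 + ∑ i, (w i - 1) * g i y, ⟨?_, v, hv, ?_⟩, ?_⟩
    · fun_prop
    · intro y hy
      have hz : ∀ i, g i y = 0 := by
        intro i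
        refine hg0 i y (fun hyV => hy ?_)
        exact mem_iUnion.2 ⟨i, hyV.1⟩
      simp [hz]
    · intro j
      have hsum : ∑ i, (w i - 1) * g i (x j) = (w j - 1) := by
        rw [Finset.sum_eq_single j]
        · rw [hg1 j, mul_one]
        · intro i _ hij
          have : g i (x j) = 0 := by
            refine hg0 i (x j) ?_
            intro hmem
            exact hmem.2 ⟨j, fun hji => hij hji.symm, rfl⟩
          rw [this, mul_zero]
        · intro hj; exact absurd (Finset.mem_univ j) hj
      simpa [hsum] using hw j
  obtain ⟨f, hf, hdense⟩ := h A hA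
  choose s hsU hs1 using fun n => (hf n).2
  refine ⟨fun m => s (natSigmaEquiv m).1 (natSigmaEquiv m).2, ?_, ?_⟩
  · intro m
    have := hsU (natSigmaEquiv m).1 (natSigmaEquiv m).2
    have heq : e ⟨(natSigmaEquiv m).1, (natSigmaEquiv m).2⟩ = m := by
      simp [he, Sigma.eta]
    rwa [heq] at this
  · rw [eq_univ_iff_forall]
    intro x
    obtain ⟨h0, hh0, hlt⟩ := hdense x 1 one_pos
    obtain ⟨n, rfl⟩ := hh0
    by_cases hx : x ∈ ⋃ i, s n i
    · obtain ⟨i, hi⟩ := mem_iUnion.1 hx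
      refine mem_iUnion.2 ⟨e ⟨n, i⟩, ?_⟩
      have heq2 : natSigmaEquiv (e ⟨n, i⟩) = ⟨n, i⟩ := by simp [he]
      rw [heq2]
      exact hi
    · have := hs1 n x hx
      simp [this] at hlt
end

section
/- For a Tychonoff space X: if C_p(X) satisfies U_fin(Γ_0, Γ_0) (for every sequence of sets converging pointwise to 0 one can choose finite subsets F_n such that for every finite K ⊆ X and ε > 0 there is n' with: for all n > n' and each x ∈ K, some g ∈ F_n has |g(x)| < ε), then X satisfies U_fin(Γ_F, Γ): for every sequence of γ_F-shrinkable γ-covers U_n there are finite F_n ⊆ U_n with {⋃F_n : n ∈ ω} a γ-cover of X. -/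
open Set Filter Topology

/-! For each member `u` of a γ_F-shrinkable cover take a continuous function vanishing on the
shrinking of `u` and equal to `1` off `u`. Since the shrinkings form a γ-family, these functions
converge pointwise to `0`, so U_fin(Γ_0, Γ_0) picks finite sets of them which, eventually, take a
value below `1` at any given point; the corresponding members of the cover then contain it. -/

theorem IsZeroSet.exists_continuous_zero_one {X : Type*} [TopologicalSpace X] {Z u : Set X}
    (hZ : IsZeroSet Z) (hu : IsCozeroSet u) (hZu : Z ⊆ u) :
    ∃ φ : X → ℝ, Continuous φ ∧ EqOn φ 0 Z ∧ EqOn φ 1 uᶜ := by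
  obtain ⟨g, hg, rfl⟩ := hZ
  obtain ⟨f, hf, rfl⟩ := hu
  have hden : ∀ x, |g x| + |f x| ≠ 0 := by
    intro x hx
    have hgx : g x = 0 := abs_eq_zero.mp (by linarith [abs_nonneg (g x), abs_nonneg (f x)])
    have hfx : f x = 0 := abs_eq_zero.mp (by linarith [abs_nonneg (g x), abs_nonneg (f x)])
    exact hZu hgx hfx
  refine ⟨fun x => |g x| / (|g x| + |f x|), by fun_prop (disch := exact hden _), ?_, ?_⟩
  · intro x (hx : g x = 0)
    simp [hx]
  · intro x (hx : ¬f x ≠ 0)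
    have hgx : g x ≠ 0 := fun h => hx (hZu h)
    simp [not_not.mp hx, hgx]

theorem GammaFam.eventually_mem {X : Type*} {V : Set (Set X)} (hV : GammaFam V) (x : X) :
    ∀ᶠ v in cofinite ⊓ 𝓟 V, x ∈ v := by
  rw [eventually_inf_principal, eventually_cofinite]
  simpa only [Classical.not_imp] using hV.2 x

theorem GammaFam.gammaAt_zero_image {X : Type*} {V : Set (Set X)} (hV : GammaFam V)
    {ψ : Set X → X → ℝ} (hzero : ∀ v ∈ V, EqOn (ψ v) 0 v) (hne : ∀ v ∈ V, ψ v ≠ 0) :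
    GammaAt (0 : X → ℝ) (ψ '' V) := by
  have htendsto : Tendsto ψ (cofinite ⊓ 𝓟 V) (𝓝 0) := by
    refine tendsto_pi_nhds.mpr fun x => tendsto_const_nhds.congr' ?_
    filter_upwards [hV.eventually_mem x, inf_le_right (a := cofinite) (mem_principal_self V)]
      with v hxv hv
    exact (hzero v hv hxv).symm
  refine ⟨fun hfin => hV.1 ?_, fun ⟨v, hv, h0⟩ => hne v hv h0, fun W hW => ?_⟩
  · have hsupp : ∀ g ∈ ψ '' V, ∃ y, g y ≠ 0 := by
      rintro _ ⟨v, hv, rfl⟩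
      exact Function.ne_iff.mp (hne v hv)
    have : Nonempty X := let ⟨v, hv⟩ := hV.1.nonempty; ⟨(hsupp _ ⟨v, hv, rfl⟩).choose⟩
    choose! y hy using hsupp
    refine (hfin.biUnion fun g _ => hV.2 (y g)).subset fun v hv => ?_
    exact mem_biUnion (mem_image_of_mem ψ hv) ⟨hv, fun hyv => hy _ (mem_image_of_mem ψ hv)
      (hzero v hv hyv)⟩
  · have hfin : {v | v ∈ V ∧ ψ v ∉ W}.Finite := by
      simpa only [eventually_inf_principal, eventually_cofinite, Classical.not_imp] using
        htendsto.eventually_mem hW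
    refine (hfin.image ψ).subset ?_
    rintro _ ⟨⟨v, hv, rfl⟩, hvW⟩
    exact mem_image_of_mem ψ ⟨hv, hvW⟩

theorem GammaFShrinkable.exists_gammaAt_zero {X : Type*} [TopologicalSpace X]
    {U : Set (Set X)} (hU : GammaFShrinkable U) :
    ∃ A ⊆ Cp X, GammaAt (0 : X → ℝ) A ∧ ∀ g ∈ A, ∃ u ∈ U, EqOn g 1 uᶜ := by
  obtain ⟨⟨-, huniv, -⟩, hcozero, S, hS, hSγ⟩ := hU
  choose! φ hφc hφ0 hφ1 using fun u (hu : u ∈ U) =>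
    (hS u hu).1.exists_continuous_zero_one (hcozero u hu) (hS u hu).2
  -- the shrinking need not be injective, so the functions are indexed by the shrunk sets
  choose! r hrU hSr using fun v (hv : v ∈ S '' U) => hv
  have hne : ∀ v ∈ S '' U, φ (r v) ≠ 0 := by
    intro v hv h0
    obtain ⟨x, hx⟩ := ne_univ_iff_exists_notMem _ |>.mp fun h => huniv (h ▸ hrU v hv)
    simpa [h0] using hφ1 _ (hrU v hv) hx
  refine ⟨(φ ∘ r) '' (S '' U), ?_, hSγ.gammaAt_zero_image (fun v hv => ?_) hne, ?_⟩
  · rintro _ ⟨v, hv, rfl⟩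
    exact hφc _ (hrU v hv)
  · simpa only [Function.comp, hSr v hv] using hφ0 _ (hrU v hv)
  · rintro _ ⟨v, hv, rfl⟩
    exact ⟨r v, hrU v hv, hφ1 _ (hrU v hv)⟩

theorem stmt16_general {X : Type*} [TopologicalSpace X]
    (h : ∀ A : ℕ → Set (X → ℝ), (∀ n, A n ⊆ Cp X ∧ GammaAt (0 : X → ℝ) (A n)) →
      ∃ F : ℕ → Set (X → ℝ), (∀ n, (F n).Finite ∧ F n ⊆ A n) ∧
        ∀ K : Set X, K.Finite → ∀ ε : ℝ, 0 < ε →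
          ∃ n₀ : ℕ, ∀ n > n₀, ∀ x ∈ K, ∃ g ∈ F n, |g x| < ε) :
    ∀ U : ℕ → Set (Set X), (∀ n, GammaFShrinkable (U n)) →
      ∃ F : ℕ → Set (Set X), (∀ n, (F n).Finite ∧ F n ⊆ U n) ∧
        ∀ x : X, {n : ℕ | x ∉ ⋃₀ F n}.Finite := by
  intro U hU
  choose A hACp hAγ hAU using fun n => (hU n).exists_gammaAt_zero
  choose! u huU hu1 using hAU
  obtain ⟨G, hG, hGconv⟩ := h A fun n => ⟨hACp n, hAγ n⟩
  refine ⟨fun n => u n '' G n, fun n => ⟨(hG n).1.image _, ?_⟩, fun x => ?_⟩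
  · rintro _ ⟨g, hg, rfl⟩
    exact huU n g ((hG n).2 hg)
  obtain ⟨n₀, hn₀⟩ := hGconv {x} (finite_singleton x) 1 one_pos
  refine (finite_le_nat n₀).subset fun n hn => (not_lt.mp fun hlt => hn ?_ : n ≤ n₀)
  obtain ⟨g, hg, hgx⟩ := hn₀ n hlt x rfl
  refine ⟨u n g, mem_image_of_mem _ hg, by_contra fun hxu => ?_⟩
  simp [hu1 n g ((hG n).2 hg) hxu] at hgx

/-- If `C_p(X)` satisfies U_fin(Γ_0, Γ_0) at the zero function, then `X`
satisfies U_fin(Γ_F, Γ). -/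
theorem stmt16 {X : Type*} [TopologicalSpace X] [T35Space X]
    (h : ∀ A : ℕ → Set (X → ℝ), (∀ n, A n ⊆ Cp X ∧ GammaAt (0 : X → ℝ) (A n)) →
      ∃ F : ℕ → Set (X → ℝ), (∀ n, (F n).Finite ∧ F n ⊆ A n) ∧
        ∀ K : Set X, K.Finite → ∀ ε : ℝ, 0 < ε →
          ∃ n₀ : ℕ, ∀ n > n₀, ∀ x ∈ K, ∃ g ∈ F n, |g x| < ε) :
    ∀ U : ℕ → Set (Set X), (∀ n, GammaFShrinkable (U n)) →
      ∃ F : ℕ → Set (Set X), (∀ n, (F n).Finite ∧ F n ⊆ U n) ∧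
        ∀ x : X, {n : ℕ | x ∉ ⋃₀ F n}.Finite :=
  stmt16_general h
end

section
/- For a Tychonoff space X: if C_p(X) satisfies S_1(Γ_0, B_0) (for every sequence (A_i) of sets of continuous functions converging pointwise to 0 one can select f_i ∈ A_i such that for each x ∈ X and ε > 0 some f_i satisfies |f_i(x)| < ε), then X satisfies S_1(Γ_F, O): for every sequence of γ_F-shrinkable γ-covers one can select one member from each so that the selected sets cover X. -/
open Set Filter Topology

lemma sep_fun {X : Type*} [TopologicalSpace X] {Z u : Set X}
    (hZ : IsZeroSet Z) (hu : IsCozeroSet u) (hsub : Z ⊆ u) :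
    ∃ g : X → ℝ, Continuous g ∧ (∀ x, g x = 0 ↔ x ∈ Z) ∧ (∀ x, |g x| < 1 → x ∈ u) := by
  obtain ⟨g0, hg0, rfl⟩ := hZ
  obtain ⟨h0, hh0, rfl⟩ := hu
  have hd : ∀ x, |g0 x| + |h0 x| ≠ 0 := by
    intro x hx
    have h1 : |g0 x| = 0 := by nlinarith [abs_nonneg (g0 x), abs_nonneg (h0 x)]
    have h2 : |h0 x| = 0 := by nlinarith [abs_nonneg (g0 x), abs_nonneg (h0 x)]
    have : x ∈ g0 ⁻¹' {0} := by simpa using abs_eq_zero.mp h1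
    exact hsub this (by simpa using abs_eq_zero.mp h2)
  refine ⟨fun x => |g0 x| / (|g0 x| + |h0 x|), ?_, ?_, ?_⟩
  · exact (hg0.abs).div ((hg0.abs).add (hh0.abs)) hd
  · intro x
    simp only [mem_preimage, mem_singleton_iff]
    rw [div_eq_zero_iff]
    constructor
    · rintro (h1 | h1)
      · exact abs_eq_zero.mp h1
      · exact absurd h1 (hd x)
    · intro h1; left; rw [h1]; simp
  · intro x hx
    by_contra hxu
    have hz : h0 x = 0 := by simpa using hxu
    have hgx : g0 x ≠ 0 := by
      intro h1
      exact hxu (fun h2 => (hsub (by simpa using h1)) h2)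
    have : |g0 x| / (|g0 x| + |h0 x|) = 1 := by
      rw [hz, abs_zero, add_zero, div_self (abs_ne_zero.mpr hgx)]
    simp only [] at hx
    rw [this] at hx
    simp at hx

lemma key_lemma {X : Type*} [TopologicalSpace X] (U : Set (Set X))
    (hU : GammaFShrinkable U) :
    ∃ (A : Set (X → ℝ)) (sel : (X → ℝ) → Set X),
      (A ⊆ Cp X ∧ GammaAt (0 : X → ℝ) A) ∧
      ∀ g ∈ A, sel g ∈ U ∧ ∀ x, |g x| < 1 → x ∈ sel g := by
  obtain ⟨⟨hopen, huniv, hUinf, hUγ⟩, hcoz, F, hF, hTinf, hTγ⟩ := hU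
  set T : Set (Set X) := F '' U with hT
  have hex : ∀ v ∈ T, ∃ (g : X → ℝ) (u : Set X), u ∈ U ∧ Continuous g ∧
      (∀ x, g x = 0 ↔ x ∈ v) ∧ (∀ x, |g x| < 1 → x ∈ u) := by
    rintro v ⟨u, huU, rfl⟩
    obtain ⟨gz, hc, hz, hlt⟩ := sep_fun (hF u huU).1 (hcoz u huU) (hF u huU).2
    exact ⟨gz, u, huU, hc, hz, hlt⟩
  choose! g u huU hgc hgz hglt using hex
  have hinjT : Set.InjOn g T := by
    intro v hv w hw hvw
    ext x
    rw [← hgz v hv x, ← hgz w hw x, hvw]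
  refine ⟨g '' T, fun f => haveI := Classical.dec; if hf : ∃ v ∈ T, g v = f then u hf.choose else ∅, ⟨?_, ?_, ?_, ?_⟩, ?_⟩
  · rintro f ⟨v, hv, rfl⟩
    exact hgc v hv
  · exact hTinf.image hinjT
  · rintro ⟨v, hv, hv0⟩
    have hne : u v ≠ univ := fun hu => huniv (hu ▸ huU v hv)
    obtain ⟨x, hx⟩ := (ne_univ_iff_exists_notMem _).mp hne
    have : |g v x| < 1 → x ∈ u v := hglt v hv x
    have h1 : ¬ |g v x| < 1 := fun hlt => hx (this hlt)
    have : g v x = 0 := by rw [hv0]; rfl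
    rw [this] at h1
    simp at h1
  · intro W hW
    rw [nhds_pi, Filter.mem_pi] at hW
    obtain ⟨I, hIfin, t, ht, hsub⟩ := hW
    have hkey : (g '' T) \ W ⊆ g '' (⋃ x ∈ I, {v ∈ T | x ∉ v}) := by
      rintro f ⟨⟨v, hv, rfl⟩, hfW⟩
      have : ∃ x ∈ I, x ∉ v := by
        by_contra hc
        push_neg at hc
        apply hfW
        apply hsub
        intro x hx
        have : g v x = 0 := (hgz v hv x).mpr (hc x hx)
        rw [this]
        exact mem_of_mem_nhds (by simpa using ht x)
      obtain ⟨x, hxI, hxv⟩ := this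
      exact ⟨v, mem_biUnion hxI ⟨hv, hxv⟩, rfl⟩
    refine Set.Finite.subset (Set.Finite.image g ?_) hkey
    exact hIfin.biUnion (fun x _ => hTγ x)
  · rintro f ⟨v, hv, rfl⟩
    have hf : ∃ w ∈ T, g w = g v := ⟨v, hv, rfl⟩
    simp only [dif_pos hf]
    obtain ⟨hwT, hwg⟩ := hf.choose_spec
    refine ⟨huU _ hwT, fun x hx => ?_⟩
    exact hglt _ hwT x (by rw [hwg]; exact hx)

/-- If `C_p(X)` satisfies S_1(Γ_0, B_0) at the zero function, then `X`
satisfies S_1(Γ_F, O). -/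
theorem stmt17 {X : Type*} [TopologicalSpace X] [T35Space X]
    (h : ∀ A : ℕ → Set (X → ℝ), (∀ n, A n ⊆ Cp X ∧ GammaAt (0 : X → ℝ) (A n)) →
      ∃ f : ℕ → X → ℝ, (∀ n, f n ∈ A n) ∧ OneDenseAt (0 : X → ℝ) (range f)) :
    ∀ U : ℕ → Set (Set X), (∀ n, GammaFShrinkable (U n)) →
      ∃ u : ℕ → Set X, (∀ n, u n ∈ U n) ∧ (⋃ n, u n) = univ := by
  intro U hUs
  choose A sel hA hsel using fun n => key_lemma (U n) (hUs n)
  obtain ⟨f, hf, hdense⟩ := h A hA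
  refine ⟨fun n => sel n (f n), fun n => (hsel n (f n) (hf n)).1, ?_⟩
  ext x
  simp only [mem_iUnion, mem_univ, iff_true]
  obtain ⟨g, hg, hgx⟩ := hdense x 1 one_pos
  obtain ⟨n, rfl⟩ := hg
  refine ⟨n, (hsel n (f n) (hf n)).2 x ?_⟩
  simpa using hgx
end

section
/- For a Tychonoff space X: if X satisfies S_1(Γ_F, O), then C_p(X) satisfies S_1(Γ_0, B_0): for every sequence of subsets of C(X) converging pointwise to 0, one may select one function from each such that for every x ∈ X and ε > 0 some selected function f satisfies |f(x)| < ε. -/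
open Set Filter Topology

lemma aux_infinite_image {α β : Type*} {s : Set α} (f : α → β) (hs : s.Infinite)
    (hf : ∀ a ∈ s, {a' ∈ s | f a' = f a}.Finite) : (f '' s).Infinite := by
  intro hfin
  apply hs
  have hsub : s ⊆ ⋃ b ∈ f '' s, {a ∈ s | f a = b} := fun a ha =>
    Set.mem_biUnion (Set.mem_image_of_mem f ha) ⟨ha, rfl⟩
  refine (Set.Finite.biUnion hfin ?_).subset hsub
  rintro b ⟨a, ha, rfl⟩
  exact hf a ha

lemma aux_key {X : Type*} [TopologicalSpace X] {B : Set (X → ℝ)}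
    (hB : ∀ W ∈ 𝓝 (0 : X → ℝ), (B \ W).Finite) (x : X) {δ : ℝ} (hδ : 0 < δ) :
    {g ∈ B | ¬ |g x| < δ}.Finite := by
  have hopen : IsOpen {h : X → ℝ | |h x| < δ} :=
    isOpen_lt ((continuous_apply x).abs) continuous_const
  have hW : {h : X → ℝ | |h x| < δ} ∈ 𝓝 (0 : X → ℝ) :=
    hopen.mem_nhds (by simp [hδ])
  exact (hB _ hW).subset (fun g hg => ⟨hg.1, hg.2⟩)

lemma aux_max_ne (t : ℝ) : max 0 t ≠ 0 ↔ 0 < t := by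
  rw [ne_eq, max_eq_left_iff, not_le]

lemma aux_max_eq (t : ℝ) : max 0 t = 0 ↔ t ≤ 0 := max_eq_left_iff

lemma aux_column {X : Type*} [TopologicalSpace X]
    (h : ∀ U : ℕ → Set (Set X), (∀ n, GammaFShrinkable (U n)) →
      ∃ u : ℕ → Set X, (∀ n, u n ∈ U n) ∧ (⋃ n, u n) = univ)
    (B : ℕ → Set (X → ℝ)) (hB : ∀ i, B i ⊆ Cp X ∧ GammaAt (0 : X → ℝ) (B i))
    {δ : ℝ} (hδ : 0 < δ) :
    ∃ F : ℕ → X → ℝ, (∀ i, F i ∈ B i) ∧ ∀ x, ∃ i, |F i x| < δ := by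
  classical
  have hnon : ∀ i, (B i).Nonempty := fun i => (hB i).2.1.nonempty
  by_cases hgood : ∃ i, ∃ g ∈ B i, ∀ x, |g x| < δ
  · obtain ⟨i₀, g, hg, hgδ⟩ := hgood
    refine ⟨fun i => if i = i₀ then g else (hnon i).some, fun i => ?_,
      fun x => ⟨i₀, by simp [hgδ x]⟩⟩
    by_cases hi : i = i₀
    · subst hi; simp [hg]
    · simp [hi, (hnon i).some_mem]
  · push_neg at hgood
    set Φ : (X → ℝ) → Set X := fun g => {x | |g x| < δ} with hΦ
    have hUshrink : ∀ i, GammaFShrinkable (Φ '' B i) := by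
      intro i
      obtain ⟨hsub, hinf, -, hconv⟩ := hB i
      have hcont : ∀ g ∈ B i, Continuous g := fun g hg => hsub hg
      have hprop : ∀ g ∈ B i, ∃ x, δ ≤ |g x| := hgood i
      have key : ∀ (x : X) {δ' : ℝ}, 0 < δ' → {g ∈ B i | ¬ |g x| < δ'}.Finite :=
        fun x _ hδ' => aux_key hconv x hδ'
      have fibΦ : ∀ g ∈ B i, {g' ∈ B i | Φ g' = Φ g}.Finite := by
        intro g hg
        obtain ⟨x, hx⟩ := hprop g hg
        refine (key x hδ).subset ?_
        rintro g' ⟨hg', hEq⟩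
        refine ⟨hg', fun hlt => ?_⟩
        have hmem : x ∈ Φ g' := hlt
        rw [hEq] at hmem
        exact absurd hmem (not_lt.mpr hx)
      set gsel : Set X → (X → ℝ) := fun u => if h : ∃ g ∈ B i, Φ g = u then h.choose else 0
        with hgsel
      have hgsel_spec : ∀ u ∈ Φ '' B i, gsel u ∈ B i ∧ Φ (gsel u) = u := by
        rintro u ⟨g, hg, rfl⟩
        have hex : ∃ g' ∈ B i, Φ g' = Φ g := ⟨g, hg, rfl⟩
        simp only [hgsel, dif_pos hex]
        exact ⟨hex.choose_spec.1, hex.choose_spec.2⟩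
      set F : Set X → Set X := fun u => {x | |gsel u x| ≤ δ / 2} with hF
      have hFsub : ∀ u ∈ Φ '' B i, F u ⊆ u := by
        intro u hu x hx
        obtain ⟨hmem, hΦu⟩ := hgsel_spec u hu
        have hxlt : |gsel u x| < δ := lt_of_le_of_lt hx (half_lt_self hδ)
        rw [← hΦu]
        exact hxlt
      refine ⟨⟨?_, ?_, ?_, ?_⟩, ?_, F, fun u hu => ⟨?_, hFsub u hu⟩, ?_, ?_⟩
      · rintro u ⟨g, hg, rfl⟩
        exact isOpen_lt (hcont g hg).abs continuous_const
      · rintro ⟨g, hg, hEq⟩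
        obtain ⟨x, hx⟩ := hprop g hg
        have hmem : x ∈ Φ g := by rw [hEq]; exact mem_univ x
        exact absurd hmem (not_lt.mpr hx)
      · exact aux_infinite_image Φ hinf fibΦ
      · intro x
        refine ((key x hδ).image Φ).subset ?_
        rintro u ⟨⟨g, hg, rfl⟩, hxu⟩
        exact ⟨g, ⟨hg, hxu⟩, rfl⟩
      · rintro u ⟨g, hg, rfl⟩
        exact ⟨fun x => max 0 (δ - |g x|),
          continuous_const.max (continuous_const.sub (hcont g hg).abs),
          by ext x; simp [hΦ, aux_max_ne, sub_pos]⟩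
      · obtain ⟨hmem, hΦu⟩ := hgsel_spec u hu
        exact ⟨fun x => max 0 (|gsel u x| - δ / 2),
          continuous_const.max ((hcont _ hmem).abs.sub continuous_const),
          by ext x; simp [hF, aux_max_eq, sub_nonpos]⟩
      · refine aux_infinite_image F (aux_infinite_image Φ hinf fibΦ) ?_
        rintro u ⟨g, hg, rfl⟩
        obtain ⟨x, hx⟩ := hprop g hg
        have hxΦ : x ∉ Φ g := not_lt.mpr hx
        have hxF : x ∉ F (Φ g) := fun hxF => hxΦ (hFsub _ ⟨g, hg, rfl⟩ hxF)
        refine ((key x (half_pos hδ)).image Φ).subset ?_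
        rintro u' ⟨hu', hEq⟩
        obtain ⟨hmem', hΦu'⟩ := hgsel_spec u' hu'
        refine ⟨gsel u', ⟨hmem', fun hlt => ?_⟩, hΦu'⟩
        have hxFu' : x ∈ F u' := le_of_lt hlt
        rw [hEq] at hxFu'
        exact hxF hxFu'
      · intro x
        refine (((key x (half_pos hδ)).image Φ).image F).subset ?_
        rintro z ⟨⟨u, hu, rfl⟩, hxz⟩
        obtain ⟨hmem, hΦu⟩ := hgsel_spec u hu
        refine ⟨Φ (gsel u), ⟨gsel u, ⟨hmem, fun hlt => ?_⟩, rfl⟩, by rw [hΦu]⟩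
        exact hxz (le_of_lt hlt)
    obtain ⟨u, hu, hcov⟩ := h (fun i => Φ '' B i) hUshrink
    have hsel : ∀ i, ∃ g ∈ B i, Φ g = u i := fun i => hu i
    choose g hgmem hgeq using hsel
    refine ⟨g, hgmem, fun x => ?_⟩
    have hx : x ∈ ⋃ i, u i := by rw [hcov]; exact mem_univ x
    obtain ⟨i, hi⟩ := mem_iUnion.mp hx
    rw [← hgeq i] at hi
    exact ⟨i, hi⟩

/-- If `X` satisfies S_1(Γ_F, O), then `C_p(X)` satisfies S_1(Γ_0, B_0) at
the zero function. -/
theorem stmt18 {X : Type*} [TopologicalSpace X] [T35Space X]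
    (h : ∀ U : ℕ → Set (Set X), (∀ n, GammaFShrinkable (U n)) →
      ∃ u : ℕ → Set X, (∀ n, u n ∈ U n) ∧ (⋃ n, u n) = univ) :
    ∀ A : ℕ → Set (X → ℝ), (∀ n, A n ⊆ Cp X ∧ GammaAt (0 : X → ℝ) (A n)) →
      ∃ f : ℕ → X → ℝ, (∀ n, f n ∈ A n) ∧ OneDenseAt (0 : X → ℝ) (range f) := by
  intro A hA
  have hcol : ∀ j : ℕ, ∃ F : ℕ → X → ℝ, (∀ i, F i ∈ A (Nat.pair j i)) ∧
      ∀ x, ∃ i, |F i x| < 1 / ((j : ℝ) + 1) :=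
    fun j => aux_column h (fun i => A (Nat.pair j i)) (fun i => hA _) (by positivity)
  choose FF hFFmem hFFcov using hcol
  refine ⟨fun n => FF (Nat.unpair n).1 (Nat.unpair n).2, fun n => ?_, ?_⟩
  · have hm := hFFmem (Nat.unpair n).1 (Nat.unpair n).2
    rwa [Nat.pair_unpair] at hm
  · intro x ε hε
    obtain ⟨j, hj⟩ := exists_nat_one_div_lt hε
    obtain ⟨i, hi⟩ := hFFcov j x
    refine ⟨FF j i, ⟨Nat.pair j i, by simp [Nat.unpair_pair]⟩, ?_⟩
    simp only [Pi.zero_apply, sub_zero]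
    exact hi.trans hj
end
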